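/- arXiv:2212.07269 — 12 statements merged into one kernel-verified Lean document; each statement's English description precedes it below -/
import Mathlib

section
/- Let U be a nonempty open convex cone in E = ℝ^n and let φ : E → ℝ be continuous on E and differentiable on U, with differential F(u) = dφ(u) ∈ E* for u ∈ U. Assume: (1) φ is concave on U; (2) φ is positively 1-homogeneous; (3) φ > 0 on U and φ = 0 on E ∖ U. Let C₁ = {l ∈ E* : l(u) ≥ φ(u) for all u ∈ U} and let C₁° denote the interior of C₁ in E*. Then C₁° ⊆ {r • F(u) : r ∈ ℝ, r ≥ 1, u ∈ U} ⊆ C₁. -/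
/-!
By concavity, `φ v ≤ φ u + dφ(u) (v - u)` on `U`, and Euler's identity `dφ(u) u = φ u` turns this
into `φ ≤ dφ(u)` on `U`; multiples `r ≥ 1` preserve the inequality because `φ ≥ 0`.

Conversely, if `l` lies in the interior of `C₁`, then `l - ε ‖·‖` still lies in `C₁` for a small
`ε > 0`, so `l` is coercive on `{φ ≥ 1} ⊆ U` and attains its minimum there at some `w`. Rescaling
by homogeneity gives `l ≥ l(w) φ` on `U`, with `l(w) ≥ φ(w) ≥ 1`, so `v ↦ l v - l(w) φ v` has a
local minimum at `w ∈ U`; its differential vanishes there, i.e. `l = l(w) • dφ(w)`.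
-/

open Filter Topology

section

variable {E : Type*} [NormedAddCommGroup E] [NormedSpace ℝ E] {φ : E → ℝ}

theorem fderiv_apply_self_of_homogeneous
    (hhom : ∀ t : ℝ, 0 < t → ∀ x : E, φ (t • x) = t * φ x) {u : E}
    (hd : DifferentiableAt ℝ φ u) : fderiv ℝ φ u u = φ u := by
  have hray : HasDerivAt (fun t : ℝ => φ (t • u)) (fderiv ℝ φ u u) 1 :=
    hd.hasFDerivAt.comp_hasDerivAt_of_eq 1
      (by simpa using (hasDerivAt_id' (1 : ℝ)).smul_const u) (one_smul ℝ u).symm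
  have hlin : (fun t : ℝ => φ (t • u)) =ᶠ[𝓝 1] fun t => t * φ u := by
    filter_upwards [eventually_gt_nhds one_pos] with t ht using hhom t ht u
  simpa using hray.unique ((hasDerivAt_mul_const (φ u)).congr_of_eventuallyEq hlin)

theorem ConcaveOn.le_add_fderiv {U : Set E} (hconc : ConcaveOn ℝ U φ) {u v : E} (hu : u ∈ U)
    (hv : v ∈ U) (hd : DifferentiableAt ℝ φ u) : φ v ≤ φ u + fderiv ℝ φ u (v - u) := by
  set g := AffineMap.lineMap (k := ℝ) u v
  have hg : ConcaveOn ℝ (g ⁻¹' U) (φ ∘ g) := hconc.comp_affineMap g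
  have hderiv : HasDerivAt (φ ∘ g) (fderiv ℝ φ u (v - u)) 0 := by
    have : HasFDerivAt φ (fderiv ℝ φ u) (g 0) := by simpa [g] using hd.hasFDerivAt
    exact this.comp_hasDerivAt 0 AffineMap.hasDerivAt_lineMap
  have := hg.slope_le_of_hasDerivAt (by simpa [g] using hu) (by simpa [g] using hv) one_pos hderiv
  simp only [slope_def_field, Function.comp_apply, AffineMap.lineMap_apply_one,
    AffineMap.lineMap_apply_zero, sub_zero, div_one, g] at this
  linarith

theorem le_smul_fderiv_apply_of_concaveOn {U : Set E} (hconc : ConcaveOn ℝ U φ)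
    (hhom : ∀ t : ℝ, 0 < t → ∀ x : E, φ (t • x) = t * φ x) {u v : E} (hu : u ∈ U) (hv : v ∈ U)
    (hd : DifferentiableAt ℝ φ u) (hφv : 0 ≤ φ v) {r : ℝ} (hr : 1 ≤ r) :
    φ v ≤ (r • fderiv ℝ φ u) v := by
  have hsupp : φ v ≤ fderiv ℝ φ u v := by
    simpa [fderiv_apply_self_of_homogeneous hhom hd] using hconc.le_add_fderiv hu hv hd
  calc φ v ≤ fderiv ℝ φ u v := hsupp
    _ ≤ r * fderiv ℝ φ u v := le_mul_of_one_le_left (hφv.trans hsupp) hr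

theorem exists_add_mul_norm_le_of_mem_interior {U : Set E} {l : E →L[ℝ] ℝ}
    (hl : l ∈ interior {l : E →L[ℝ] ℝ | ∀ u ∈ U, φ u ≤ l u}) :
    ∃ ε > 0, ∀ u ∈ U, φ u + ε * ‖u‖ ≤ l u := by
  obtain ⟨ε, hε, hball⟩ := Metric.isOpen_iff.mp isOpen_interior l hl
  refine ⟨ε / 2, half_pos hε, fun u hu => ?_⟩
  rcases eq_or_ne u 0 with rfl | hu0
  · simpa using interior_subset hl 0 hu
  obtain ⟨g, hg, hgu⟩ := exists_dual_vector ℝ u (norm_ne_zero_iff.2 hu0)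
  have hmem : l - (ε / 2) • g ∈ Metric.ball l ε := by
    rw [Metric.mem_ball, dist_eq_norm, sub_sub_cancel_left, norm_neg, norm_smul, hg, mul_one,
      Real.norm_of_nonneg (half_pos hε).le]
    exact half_lt_self hε
  have := interior_subset (hball hmem) u hu
  simp only [sub_apply, smul_apply, hgu, Real.ringHom_apply, smul_eq_mul] at this
  linarith

theorem mul_le_of_isMinOn_superlevel (hhom : ∀ t : ℝ, 0 < t → ∀ x : E, φ (t • x) = t * φ x)
    {l : E →L[ℝ] ℝ} {w : E} (hmin : IsMinOn l {v | 1 ≤ φ v} w) {v : E} (hv : 0 < φ v) :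
    l w * φ v ≤ l v := by
  have hnorm : 1 ≤ φ ((φ v)⁻¹ • v) := by rw [hhom _ (inv_pos.2 hv), inv_mul_cancel₀ hv.ne']
  have : l w ≤ l ((φ v)⁻¹ • v) := hmin hnorm
  rw [map_smul, smul_eq_mul, le_inv_mul_iff₀ hv] at this
  linarith

theorem eq_smul_fderiv_of_isLocalMin {l : E →L[ℝ] ℝ} {c : ℝ} {w : E}
    (hd : DifferentiableAt ℝ φ w) (hmin : IsLocalMin (fun v => l v - c * φ v) w) :
    l = c • fderiv ℝ φ w := by
  have hderiv := l.hasFDerivAt.sub (hd.hasFDerivAt.const_mul c)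
  rw [← sub_eq_zero, ← hderiv.fderiv]
  exact hmin.fderiv_eq_zero

end

theorem ContinuousOn.exists_isMinOn_of_mul_norm_le {E : Type*} [NormedAddCommGroup E]
    [ProperSpace E] {f : E → ℝ} {s : Set E} (hf : ContinuousOn f s) (hs : IsClosed s)
    (hne : s.Nonempty) {ε : ℝ} (hε : 0 < ε) (hfs : ∀ x ∈ s, ε * ‖x‖ ≤ f x) :
    ∃ x ∈ s, IsMinOn f s x := by
  obtain ⟨x₀, hx₀⟩ := hne
  refine hf.exists_isMinOn' hs hx₀ ?_
  have hfar : ∀ᶠ x in cocompact E, f x₀ / ε ≤ ‖x‖ :=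
    tendsto_norm_cocompact_atTop.eventually_ge_atTop _
  filter_upwards [inf_le_left (b := 𝓟 s) hfar, mem_inf_of_right (mem_principal_self s)]
    with x hx hxs
  rw [div_le_iff₀ hε] at hx
  linarith [hfs x hxs]

theorem stmt1_general (n : ℕ) (U : Set (Fin n → ℝ)) (hne : U.Nonempty) (hopen : IsOpen U)
    (φ : (Fin n → ℝ) → ℝ) (hcont : Continuous φ)
    (hdiff : ∀ u ∈ U, DifferentiableAt ℝ φ u)
    (hconc : ConcaveOn ℝ U φ)
    (hhom : ∀ t : ℝ, 0 < t → ∀ x : Fin n → ℝ, φ (t • x) = t * φ x)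
    (hpos : ∀ u ∈ U, 0 < φ u)
    (hzero : ∀ x : Fin n → ℝ, x ∉ U → φ x = 0) :
    interior {l : (Fin n → ℝ) →L[ℝ] ℝ | ∀ u ∈ U, φ u ≤ l u} ⊆
        {l : (Fin n → ℝ) →L[ℝ] ℝ | ∃ r : ℝ, 1 ≤ r ∧ ∃ u ∈ U, l = r • fderiv ℝ φ u} ∧
      {l : (Fin n → ℝ) →L[ℝ] ℝ | ∃ r : ℝ, 1 ≤ r ∧ ∃ u ∈ U, l = r • fderiv ℝ φ u} ⊆
        {l : (Fin n → ℝ) →L[ℝ] ℝ | ∀ u ∈ U, φ u ≤ l u} := by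
  have hmemU : ∀ x, 0 < φ x → x ∈ U := fun x hx => by_contra fun h => hx.ne' (hzero x h)
  refine ⟨fun l hl => ?_, ?_⟩
  · obtain ⟨ε, hε, hcoer⟩ := exists_add_mul_norm_le_of_mem_interior hl
    obtain ⟨u, hu⟩ := hne
    have hsuper : {v | 1 ≤ φ v}.Nonempty :=
      ⟨(φ u)⁻¹ • u, by simp [hhom _ (inv_pos.2 (hpos u hu)), (hpos u hu).ne']⟩
    obtain ⟨w, hw, hmin⟩ := l.continuous.continuousOn.exists_isMinOn_of_mul_norm_le
      (isClosed_le continuous_const hcont) hsuper hε fun v (hv : 1 ≤ φ v) => by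
        linarith [hcoer v (hmemU v (by linarith))]
    have hw : 1 ≤ φ w := hw
    have hwU : w ∈ U := hmemU w (by linarith)
    have hlw : φ w ≤ l w := interior_subset hl w hwU
    refine ⟨l w, hw.trans hlw, w, hwU, eq_smul_fderiv_of_isLocalMin (hdiff w hwU) ?_⟩
    filter_upwards [hopen.mem_nhds hwU] with v hv
    nlinarith [mul_le_of_isMinOn_superlevel hhom hmin (hpos v hv)]
  · rintro _ ⟨r, hr, u, hu, rfl⟩ v hv
    exact le_smul_fderiv_apply_of_concaveOn hconc hhom hu hv (hdiff u hu) (hpos v hv).le hr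

/-- Multiplicative Legendre duality: for a 1-homogeneous concave function `φ`, positive
exactly on an open convex cone `U`, the interior of `C₁ = {l : l ≥ φ on U}` is contained in
the set of multiples `r • dφ(u)` with `r ≥ 1`, `u ∈ U`, which in turn is contained in `C₁`. -/
theorem stmt1 (n : ℕ) (U : Set (Fin n → ℝ)) (hne : U.Nonempty) (hopen : IsOpen U)
    (hconv : Convex ℝ U) (hcone : ∀ x ∈ U, ∀ t : ℝ, 0 < t → t • x ∈ U)
    (φ : (Fin n → ℝ) → ℝ) (hcont : Continuous φ)
    (hdiff : ∀ u ∈ U, DifferentiableAt ℝ φ u)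
    (hconc : ConcaveOn ℝ U φ)
    (hhom : ∀ t : ℝ, 0 < t → ∀ x : Fin n → ℝ, φ (t • x) = t * φ x)
    (hpos : ∀ u ∈ U, 0 < φ u)
    (hzero : ∀ x : Fin n → ℝ, x ∉ U → φ x = 0) :
    interior {l : (Fin n → ℝ) →L[ℝ] ℝ | ∀ u ∈ U, φ u ≤ l u} ⊆
        {l : (Fin n → ℝ) →L[ℝ] ℝ | ∃ r : ℝ, 1 ≤ r ∧ ∃ u ∈ U, l = r • fderiv ℝ φ u} ∧
      {l : (Fin n → ℝ) →L[ℝ] ℝ | ∃ r : ℝ, 1 ≤ r ∧ ∃ u ∈ U, l = r • fderiv ℝ φ u} ⊆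
        {l : (Fin n → ℝ) →L[ℝ] ℝ | ∀ u ∈ U, φ u ≤ l u} :=
  stmt1_general n U hne hopen φ hcont hdiff hconc hhom hpos hzero
end

section
/- Let U be a nonempty open convex cone in E = ℝ^n and let φ : E → ℝ be continuous on E and differentiable on U, with differential F(u) = dφ(u) ∈ E* for u ∈ U. Assume: (1) φ is concave on U; (2) φ is positively 1-homogeneous; (3) φ > 0 on U and φ = 0 on E ∖ U. Let C = {l ∈ E* : l(u) ≥ 0 for all u ∈ U} be the closed dual cone of U, with interior C°. Then C° ⊆ {r • F(u) : r ∈ ℝ, r > 0, u ∈ U} ⊆ C. -/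
/-! An interior point `l` of the dual cone dominates a positive multiple of the norm on
`closure U`, so the slice `closure U ∩ {l = 1}` is compact. The continuous function `φ` attains
its maximum on it at some `m`, which lies in `U` because `φ` vanishes off `U`. By homogeneity
`φ ≤ φ m • l` on `U`, with equality at `m`, so `dφ(m) = φ m • l`. Conversely, the tangent
inequality of the concave `φ` at `u`, applied at `2 • u` and at `v`, gives
`0 < φ v ≤ dφ(u) v` for `v ∈ U`. -/

open Filter Topology Set

variable {E : Type*} [NormedAddCommGroup E] [NormedSpace ℝ E]

theorem ConcaveOn.le_add_fderiv_sub {s : Set E} {f : E → ℝ} (hf : ConcaveOn ℝ s f) {x y : E}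
    (hx : x ∈ s) (hy : y ∈ s) (hd : DifferentiableAt ℝ f x) :
    f y ≤ f x + fderiv ℝ f x (y - x) := by
  set g : ℝ →ᵃ[ℝ] E := AffineMap.lineMap x y
  have hline : ConcaveOn ℝ (g ⁻¹' s) (f ∘ g) := hf.comp_affineMap g
  have hder : HasDerivAt (f ∘ g) (fderiv ℝ f x (y - x)) 0 := by
    refine HasFDerivAt.comp_hasDerivAt (0 : ℝ) ?_ AffineMap.hasDerivAt_lineMap
    simpa [g] using hd.hasFDerivAt
  have hg0 : g 0 = x := AffineMap.lineMap_apply_zero x y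
  have hg1 : g 1 = y := AffineMap.lineMap_apply_one x y
  have := hline.slope_le_of_hasDerivAt (by simpa [hg0]) (by simpa [hg1]) zero_lt_one hder
  simp only [slope_def_field, Function.comp_apply, hg0, hg1, sub_zero, div_one] at this
  linarith

theorem le_fderiv_apply_of_concaveOn_of_homogeneous {U : Set E}
    (hcone : ∀ x ∈ U, ∀ t : ℝ, 0 < t → t • x ∈ U) {φ : E → ℝ} (hconc : ConcaveOn ℝ U φ)
    (hhom : ∀ t : ℝ, 0 < t → ∀ x : E, φ (t • x) = t * φ x) {u v : E} (hu : u ∈ U) (hv : v ∈ U)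
    (hd : DifferentiableAt ℝ φ u) : φ v ≤ fderiv ℝ φ u v := by
  have h2u := hconc.le_add_fderiv_sub hu (hcone u hu 2 two_pos) hd
  have hvu := hconc.le_add_fderiv_sub hu hv hd
  rw [hhom 2 two_pos, two_smul, add_sub_cancel_right] at h2u
  rw [map_sub] at hvu
  linarith

theorem zero_notMem_of_homogeneous {U : Set E} {φ : E → ℝ}
    (hhom : ∀ t : ℝ, 0 < t → ∀ x : E, φ (t • x) = t * φ x) (hpos : ∀ u ∈ U, 0 < φ u) :
    (0 : E) ∉ U := by
  intro h0
  have := hhom 2 two_pos 0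
  rw [smul_zero] at this
  linarith [hpos 0 h0]

theorem exists_pos_mul_norm_le_of_mem_interior_dual {U : Set E} {l : E →L[ℝ] ℝ}
    (hl : l ∈ interior {l : E →L[ℝ] ℝ | ∀ u ∈ U, 0 ≤ l u}) :
    ∃ c > 0, ∀ x ∈ closure U, c * ‖x‖ ≤ l x := by
  obtain ⟨ε, hε, hball⟩ := Metric.mem_nhds_iff.1 (mem_interior_iff_mem_nhds.1 hl)
  refine ⟨ε / 2, half_pos hε, fun x hx => ?_⟩
  obtain ⟨g, hg, hgx⟩ := exists_dual_vector'' ℝ x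
  have hmem : l - (ε / 2) • g ∈ Metric.ball l ε := by
    rw [Metric.mem_ball, dist_eq_norm, sub_sub_cancel_left, norm_neg]
    calc ‖(ε / 2) • g‖ ≤ ε / 2 * 1 := by
          rw [norm_smul, Real.norm_of_nonneg (half_pos hε).le]
          exact mul_le_mul_of_nonneg_left hg (half_pos hε).le
      _ < ε := by linarith
  have hnonneg : 0 ≤ (l - (ε / 2) • g) x :=
    closure_minimal (hball hmem) (isClosed_le continuous_const (l - (ε / 2) • g).continuous) hx
  simp only [sub_apply, smul_apply, hgx, RCLike.ofReal_real_eq_id, id, smul_eq_mul] at hnonneg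
  linarith

theorem isCompact_inter_preimage_one [ProperSpace E] {s : Set E} (hs : IsClosed s)
    {l : E →L[ℝ] ℝ} {c : ℝ} (hc : 0 < c) (hcl : ∀ x ∈ s, c * ‖x‖ ≤ l x) :
    IsCompact (s ∩ l ⁻¹' {1}) := by
  refine (isCompact_closedBall (0 : E) c⁻¹).of_isClosed_subset
    (hs.inter (isClosed_singleton.preimage l.continuous)) fun x ⟨hx, hlx⟩ => ?_
  rw [mem_closedBall_zero_iff, ← one_div, le_div_iff₀' hc]
  have hlx : l x = 1 := hlx
  simpa [hlx] using hcl x hx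

theorem DifferentiableAt.fderiv_eq_of_eventually_le {f : E → ℝ} {a : E} {l : E →L[ℝ] ℝ}
    (hf : DifferentiableAt ℝ f a) (hle : ∀ᶠ x in 𝓝 a, f x ≤ l x) (heq : f a = l a) :
    fderiv ℝ f a = l := by
  have hmax : IsLocalMax (f - ⇑l) a := by
    filter_upwards [hle] with x hx
    simp only [Pi.sub_apply, heq, sub_self]
    linarith
  have := hmax.fderiv_eq_zero
  rw [(hf.hasFDerivAt.sub l.hasFDerivAt).fderiv] at this
  exact sub_eq_zero.1 this

theorem exists_mem_forall_le_mul_of_homogeneous {U : Set E} (hne : U.Nonempty)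
    (hcone : ∀ x ∈ U, ∀ t : ℝ, 0 < t → t • x ∈ U) {φ : E → ℝ} (hcont : Continuous φ)
    (hhom : ∀ t : ℝ, 0 < t → ∀ x : E, φ (t • x) = t * φ x) (hpos : ∀ u ∈ U, 0 < φ u)
    (hzero : ∀ x : E, x ∉ U → φ x = 0) {l : E →L[ℝ] ℝ} (hlpos : ∀ x ∈ U, 0 < l x)
    (hK : IsCompact (closure U ∩ l ⁻¹' {1})) :
    ∃ m ∈ U, l m = 1 ∧ ∀ x ∈ U, φ x ≤ φ m * l x := by
  have hnormalize : ∀ x ∈ U, (l x)⁻¹ • x ∈ U ∩ l ⁻¹' {1} := fun x hx =>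
    ⟨hcone x hx _ (inv_pos.2 (hlpos x hx)), by simp [inv_mul_cancel₀ (hlpos x hx).ne']⟩
  obtain ⟨u, hu⟩ := hne
  obtain ⟨m, ⟨-, hlm⟩, hmax⟩ :=
    hK.exists_isMaxOn ⟨_, inter_subset_inter_left _ subset_closure (hnormalize u hu)⟩
      hcont.continuousOn
  have hslice : ∀ x ∈ U, φ ((l x)⁻¹ • x) ≤ φ m := fun x hx =>
    isMaxOn_iff.1 hmax _ (inter_subset_inter_left _ subset_closure (hnormalize x hx))
  have hmU : m ∈ U := by
    by_contra hm
    have := hslice u hu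
    rw [hzero m hm] at this
    exact this.not_gt (hpos _ (hnormalize u hu).1)
  refine ⟨m, hmU, hlm, fun x hx => ?_⟩
  have := hslice x hx
  rwa [hhom _ (inv_pos.2 (hlpos x hx)), inv_mul_le_iff₀ (hlpos x hx), mul_comm] at this

theorem stmt2_general (n : ℕ) (U : Set (Fin n → ℝ)) (hne : U.Nonempty) (hopen : IsOpen U)
    (hcone : ∀ x ∈ U, ∀ t : ℝ, 0 < t → t • x ∈ U)
    (φ : (Fin n → ℝ) → ℝ) (hcont : Continuous φ)
    (hdiff : ∀ u ∈ U, DifferentiableAt ℝ φ u)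
    (hconc : ConcaveOn ℝ U φ)
    (hhom : ∀ t : ℝ, 0 < t → ∀ x : Fin n → ℝ, φ (t • x) = t * φ x)
    (hpos : ∀ u ∈ U, 0 < φ u)
    (hzero : ∀ x : Fin n → ℝ, x ∉ U → φ x = 0) :
    interior {l : (Fin n → ℝ) →L[ℝ] ℝ | ∀ u ∈ U, 0 ≤ l u} ⊆
        {l : (Fin n → ℝ) →L[ℝ] ℝ | ∃ r : ℝ, 0 < r ∧ ∃ u ∈ U, l = r • fderiv ℝ φ u} ∧
      {l : (Fin n → ℝ) →L[ℝ] ℝ | ∃ r : ℝ, 0 < r ∧ ∃ u ∈ U, l = r • fderiv ℝ φ u} ⊆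
        {l : (Fin n → ℝ) →L[ℝ] ℝ | ∀ u ∈ U, 0 ≤ l u} := by
  refine ⟨fun l hl => ?_, ?_⟩
  · obtain ⟨c, hc, hcl⟩ := exists_pos_mul_norm_le_of_mem_interior_dual hl
    have hlpos : ∀ x ∈ U, 0 < l x := fun x hx =>
      (mul_pos hc (norm_pos_iff.2 (ne_of_mem_of_not_mem hx
        (zero_notMem_of_homogeneous hhom hpos)))).trans_le (hcl x (subset_closure hx))
    obtain ⟨m, hmU, hlm, hmax⟩ := exists_mem_forall_le_mul_of_homogeneous hne hcone hcont hhom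
      hpos hzero hlpos (isCompact_inter_preimage_one isClosed_closure hc hcl)
    have hF : fderiv ℝ φ m = φ m • l :=
      (hdiff m hmU).fderiv_eq_of_eventually_le
        (eventually_of_mem (hopen.mem_nhds hmU) hmax) (by simp [hlm])
    refine ⟨(φ m)⁻¹, inv_pos.2 (hpos m hmU), m, hmU, ?_⟩
    rw [hF, smul_smul, inv_mul_cancel₀ (hpos m hmU).ne', one_smul]
  · rintro l ⟨r, hr, u, hu, rfl⟩ v hv
    exact mul_nonneg hr.le
      ((hpos v hv).le.trans (le_fderiv_apply_of_concaveOn_of_homogeneous hcone hconc hhom hu hv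
        (hdiff u hu)))

/-- Corollary of multiplicative Legendre duality: the interior of the closed dual cone `C` of
`U` is contained in the set of positive multiples `r • dφ(u)` (`r > 0`, `u ∈ U`), which in
turn is contained in `C`. -/
theorem stmt2 (n : ℕ) (U : Set (Fin n → ℝ)) (hne : U.Nonempty) (hopen : IsOpen U)
    (hconv : Convex ℝ U) (hcone : ∀ x ∈ U, ∀ t : ℝ, 0 < t → t • x ∈ U)
    (φ : (Fin n → ℝ) → ℝ) (hcont : Continuous φ)
    (hdiff : ∀ u ∈ U, DifferentiableAt ℝ φ u)
    (hconc : ConcaveOn ℝ U φ)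
    (hhom : ∀ t : ℝ, 0 < t → ∀ x : Fin n → ℝ, φ (t • x) = t * φ x)
    (hpos : ∀ u ∈ U, 0 < φ u)
    (hzero : ∀ x : Fin n → ℝ, x ∉ U → φ x = 0) :
    interior {l : (Fin n → ℝ) →L[ℝ] ℝ | ∀ u ∈ U, 0 ≤ l u} ⊆
        {l : (Fin n → ℝ) →L[ℝ] ℝ | ∃ r : ℝ, 0 < r ∧ ∃ u ∈ U, l = r • fderiv ℝ φ u} ∧
      {l : (Fin n → ℝ) →L[ℝ] ℝ | ∃ r : ℝ, 0 < r ∧ ∃ u ∈ U, l = r • fderiv ℝ φ u} ⊆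
        {l : (Fin n → ℝ) →L[ℝ] ℝ | ∀ u ∈ U, 0 ≤ l u} :=
  stmt2_general n U hne hopen hcone φ hcont hdiff hconc hhom hpos hzero
end

section
/- Let C = {(x, y, z) ∈ [0,1]³ : x² ≤ y and x⁴ ≤ z·y²} ⊆ ℝ³ and let L : ℝ³ → ℝ² be the linear projection L(x, y, z) = (x, y). Then C is compact and convex, but the restriction of L to C, viewed as a map from C onto L(C) with their subspace topologies, is not an open map; in fact there is a neighborhood of (0,0,0) in C whose image under L is not a neighborhood of (0,0) in L(C). -/
set_option maxHeartbeats 2000000 in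
/-- A compact convex set whose projection onto a coordinate plane is not an open map:
`C = {(x,y,z) ∈ [0,1]³ : x² ≤ y, x⁴ ≤ z·y²}` with `L(x,y,z) = (x,y)`. -/
theorem stmt3 (C : Set (ℝ × ℝ × ℝ)) (L : ℝ × ℝ × ℝ → ℝ × ℝ)
    (hC : C = {p : ℝ × ℝ × ℝ | p.1 ∈ Set.Icc (0:ℝ) 1 ∧ p.2.1 ∈ Set.Icc (0:ℝ) 1 ∧
      p.2.2 ∈ Set.Icc (0:ℝ) 1 ∧ p.1 ^ 2 ≤ p.2.1 ∧ p.1 ^ 4 ≤ p.2.2 * p.2.1 ^ 2})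
    (hL : L = fun p : ℝ × ℝ × ℝ => (p.1, p.2.1)) :
    IsCompact C ∧ Convex ℝ C ∧
      ¬ IsOpenMap (Set.MapsTo.restrict L C (L '' C) (Set.mapsTo_image L C)) ∧
      ∃ V : Set (ℝ × ℝ × ℝ), V ⊆ C ∧ V ∈ nhdsWithin ((0 : ℝ), (0 : ℝ), (0 : ℝ)) C ∧
        L '' V ∉ nhdsWithin ((0 : ℝ), (0 : ℝ)) (L '' C) := by
  subst hC hL
  set C : Set (ℝ × ℝ × ℝ) := {p : ℝ × ℝ × ℝ | p.1 ∈ Set.Icc (0:ℝ) 1 ∧ p.2.1 ∈ Set.Icc (0:ℝ) 1 ∧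
      p.2.2 ∈ Set.Icc (0:ℝ) 1 ∧ p.1 ^ 2 ≤ p.2.1 ∧ p.1 ^ 4 ≤ p.2.2 * p.2.1 ^ 2} with hCdef
  set L : ℝ × ℝ × ℝ → ℝ × ℝ := fun p => (p.1, p.2.1) with hLdef
  -- compactness
  have hclosed : IsClosed C := by
    rw [hCdef]
    simp only [Set.setOf_and]
    have c1 : IsClosed {p : ℝ × ℝ × ℝ | p.1 ∈ Set.Icc (0:ℝ) 1} :=
      isClosed_Icc.preimage continuous_fst
    have c2 : IsClosed {p : ℝ × ℝ × ℝ | p.2.1 ∈ Set.Icc (0:ℝ) 1} :=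
      isClosed_Icc.preimage (continuous_fst.comp continuous_snd)
    have c3 : IsClosed {p : ℝ × ℝ × ℝ | p.2.2 ∈ Set.Icc (0:ℝ) 1} :=
      isClosed_Icc.preimage (continuous_snd.comp continuous_snd)
    have c4 : IsClosed {p : ℝ × ℝ × ℝ | p.1 ^ 2 ≤ p.2.1} :=
      isClosed_le (by fun_prop) (by fun_prop)
    have c5 : IsClosed {p : ℝ × ℝ × ℝ | p.1 ^ 4 ≤ p.2.2 * p.2.1 ^ 2} :=
      isClosed_le (by fun_prop) (by fun_prop)
    exact c1.inter (c2.inter (c3.inter (c4.inter c5)))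
  have hcomp : IsCompact C := by
    refine IsCompact.of_isClosed_subset (isCompact_Icc (a := ((0:ℝ),(0:ℝ),(0:ℝ)))
      (b := ((1:ℝ),(1:ℝ),(1:ℝ)))) hclosed ?_
    rintro ⟨x, y, z⟩ ⟨hx, hy, hz, -, -⟩
    simp only [Set.mem_Icc, Prod.le_def] at *
    exact ⟨⟨hx.1, hy.1, hz.1⟩, ⟨hx.2, hy.2, hz.2⟩⟩
  -- convexity
  have hconv : Convex ℝ C := by
    rintro ⟨x1, y1, z1⟩ hp ⟨x2, y2, z2⟩ hq a b ha hb hab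
    simp only [hCdef, Set.mem_setOf_eq, Set.mem_Icc, Prod.fst_add, Prod.snd_add,
      Prod.smul_fst, Prod.smul_snd, smul_eq_mul] at *
    obtain ⟨⟨hx10, hx11⟩, ⟨hy10, hy11⟩, ⟨hz10, hz11⟩, hc1, hd1⟩ := hp
    obtain ⟨⟨hx20, hx21⟩, ⟨hy20, hy21⟩, ⟨hz20, hz21⟩, hc2, hd2⟩ := hq
    refine ⟨⟨?_, ?_⟩, ⟨?_, ?_⟩, ⟨?_, ?_⟩, ?_, ?_⟩
    · nlinarith [mul_nonneg ha hx10, mul_nonneg hb hx20]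
    · nlinarith [mul_nonneg ha (sub_nonneg.2 hx11), mul_nonneg hb (sub_nonneg.2 hx21)]
    · nlinarith [mul_nonneg ha hy10, mul_nonneg hb hy20]
    · nlinarith [mul_nonneg ha (sub_nonneg.2 hy11), mul_nonneg hb (sub_nonneg.2 hy21)]
    · nlinarith [mul_nonneg ha hz10, mul_nonneg hb hz20]
    · nlinarith [mul_nonneg ha (sub_nonneg.2 hz11), mul_nonneg hb (sub_nonneg.2 hz21)]
    · nlinarith [mul_nonneg (mul_nonneg ha hb) (sq_nonneg (x1 - x2)),
        mul_nonneg ha (sub_nonneg.2 hc1), mul_nonneg hb (sub_nonneg.2 hc2)]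
    · rcases eq_or_lt_of_le hy10 with h1 | hy1pos
      · have hx1 : x1 = 0 := by
          have h2 : x1 ^ 2 = 0 := le_antisymm (by linarith) (sq_nonneg x1)
          exact pow_eq_zero_iff (by norm_num) |>.1 h2
        subst hx1
        rw [← h1]
        have hb1 : b ≤ 1 := by linarith
        nlinarith [mul_nonneg (mul_nonneg hb hz20) (sq_nonneg y2),
          mul_nonneg (mul_nonneg ha hz10) (sq_nonneg (b*y2)),
          mul_nonneg (mul_nonneg (mul_nonneg hb hb) hb) (sub_nonneg.2 hd2),
          mul_nonneg (mul_nonneg (mul_nonneg hb hb) (mul_nonneg hb (sub_nonneg.2 hb1)))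
            (mul_nonneg hz20 (sq_nonneg y2))]
      rcases eq_or_lt_of_le hy20 with h2 | hy2pos
      · have hx2 : x2 = 0 := by
          have h3 : x2 ^ 2 = 0 := le_antisymm (by linarith) (sq_nonneg x2)
          exact pow_eq_zero_iff (by norm_num) |>.1 h3
        subst hx2
        rw [← h2]
        have ha1 : a ≤ 1 := by linarith
        nlinarith [mul_nonneg (mul_nonneg ha hz10) (sq_nonneg y1),
          mul_nonneg (mul_nonneg hb hz20) (sq_nonneg (a*y1)),
          mul_nonneg (mul_nonneg (mul_nonneg ha ha) ha) (sub_nonneg.2 hd1),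
          mul_nonneg (mul_nonneg (mul_nonneg ha ha) (mul_nonneg ha (sub_nonneg.2 ha1)))
            (mul_nonneg hz10 (sq_nonneg y1))]
      · have hK : (a*x1+b*x2)^2 * (y1*y2) ≤ (a*(x1^2*y2)+b*(x2^2*y1)) * (a*y1+b*y2) := by
          nlinarith [mul_nonneg (mul_nonneg ha hb) (sq_nonneg (x1*y2 - x2*y1))]
        have h2 : ((a*x1+b*x2)^2 * (y1*y2))^2 ≤
            ((a*(x1^2*y2)+b*(x2^2*y1)) * (a*y1+b*y2))^2 :=
          pow_le_pow_left₀ (by positivity) hK 2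
        have h3 : (a*(x1^2*y2)+b*(x2^2*y1))^2 ≤ (a*z1+b*z2)*(y1^2*y2^2) := by
          nlinarith [mul_nonneg (mul_nonneg ha hb) (sq_nonneg (x1^2*y2 - x2^2*y1)),
            mul_nonneg (mul_nonneg ha (sub_nonneg.2 hd1)) (sq_nonneg y2),
            mul_nonneg (mul_nonneg hb (sub_nonneg.2 hd2)) (sq_nonneg y1)]
        have hP : (0:ℝ) < (y1*y2)^2 := by positivity
        have h4 := mul_le_mul_of_nonneg_right h3 (sq_nonneg (a*y1+b*y2))
        apply le_of_mul_le_mul_right _ hP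
        nlinarith [h2, h4]
  -- the neighborhood V
  have h0C : ((0:ℝ), (0:ℝ), (0:ℝ)) ∈ C := by
    simp [hCdef]
  set U : Set (ℝ × ℝ × ℝ) := {p | p.2.2 < 1/2} with hUdef
  have hUopen : IsOpen U := isOpen_lt (by fun_prop) continuous_const
  have h0U : ((0:ℝ), (0:ℝ), (0:ℝ)) ∈ U := by norm_num [hUdef]
  set V : Set (ℝ × ℝ × ℝ) := C ∩ U with hVdef
  have hVC : V ⊆ C := Set.inter_subset_left
  have hVnhds : V ∈ nhdsWithin ((0:ℝ), (0:ℝ), (0:ℝ)) C :=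
    mem_nhdsWithin.2 ⟨U, hUopen, h0U, fun p hp => ⟨hp.2, hp.1⟩⟩
  have hkey : L '' V ∉ nhdsWithin ((0:ℝ), (0:ℝ)) (L '' C) := by
    intro h
    rw [mem_nhdsWithin] at h
    obtain ⟨u, huo, hu0, hsub⟩ := h
    obtain ⟨δ, hδ, hball⟩ := Metric.isOpen_iff.1 huo _ hu0
    set t : ℝ := min (δ/2) (1/2) with htdef
    have ht0 : 0 < t := by positivity
    have ht1 : t ≤ 1/2 := min_le_right _ _
    have htδ : t < δ := lt_of_le_of_lt (min_le_left _ _) (by linarith)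
    have htu : ((t:ℝ), t^2) ∈ u := by
      apply hball
      rw [Metric.mem_ball, Prod.dist_eq]
      simp only [Real.dist_eq, sub_zero]
      rw [abs_of_pos ht0, abs_of_pos (by positivity)]
      have : t^2 ≤ t := by nlinarith
      exact max_lt htδ (by linarith)
    have htLC : ((t:ℝ), t^2) ∈ L '' C := by
      refine ⟨(t, t^2, 1), ?_, rfl⟩
      simp only [hCdef, Set.mem_setOf_eq, Set.mem_Icc]
      refine ⟨⟨ht0.le, by linarith⟩, ⟨by positivity, by nlinarith⟩, ⟨by norm_num, le_refl 1⟩,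
        le_refl _, by ring_nf; nlinarith⟩
    have := hsub ⟨htu, htLC⟩
    obtain ⟨⟨px, py, pz⟩, ⟨hpC, hpU⟩, hLp⟩ := this
    simp only [hLdef, Prod.mk.injEq] at hLp
    obtain ⟨hpx, hpy⟩ := hLp
    simp only [hCdef, Set.mem_setOf_eq, Set.mem_Icc] at hpC
    simp only [hUdef, Set.mem_setOf_eq] at hpU
    obtain ⟨-, -, ⟨hpz0, -⟩, -, hineq⟩ := hpC
    rw [hpx, hpy] at hineq
    nlinarith [pow_pos ht0 4]
  refine ⟨hcomp, hconv, ?_, V, hVC, hVnhds, hkey⟩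
  -- non-openness
  intro hopen
  set F := Set.MapsTo.restrict L C (L '' C) (Set.mapsTo_image L C) with hFdef
  have hO : IsOpen (Subtype.val ⁻¹' U : Set C) := hUopen.preimage continuous_subtype_val
  have himg : IsOpen (F '' (Subtype.val ⁻¹' U)) := hopen _ hO
  obtain ⟨W, hWopen, hWeq⟩ := isOpen_induced_iff.1 himg
  apply hkey
  refine mem_nhdsWithin.2 ⟨W, hWopen, ?_, ?_⟩
  · have : F ⟨((0:ℝ),(0:ℝ),(0:ℝ)), h0C⟩ ∈ F '' (Subtype.val ⁻¹' U) :=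
      ⟨⟨((0:ℝ),(0:ℝ),(0:ℝ)), h0C⟩, h0U, rfl⟩
    rw [← hWeq] at this
    exact this
  · rintro q ⟨hqW, hqLC⟩
    have : (⟨q, hqLC⟩ : L '' C) ∈ Subtype.val ⁻¹' W := hqW
    rw [hWeq] at this
    obtain ⟨c, hcU, hc⟩ := this
    refine ⟨c.val, ⟨c.2, hcU⟩, ?_⟩
    have := congrArg Subtype.val hc
    simpa [hFdef, Set.MapsTo.val_restrict_apply] using this
end

section
/- Let B be a vector space over ℚ and let F = {a₁, …, a_r} be a finite subset of B. Let S = {Σᵢ mᵢ aᵢ : mᵢ ∈ ℕ} be the subsemigroup generated by F, A = {Σᵢ mᵢ aᵢ : mᵢ ∈ ℤ} the subgroup generated by F, and C = {Σᵢ qᵢ aᵢ : qᵢ ∈ ℚ, qᵢ ≥ 0} the rational convex cone generated by F. Then there exists s ∈ S such that A ∩ (s + C) = s + (A ∩ C) ⊆ S ⊆ A ∩ C. -/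
/-!
Write `x ∈ A ∩ C` as `∑ qᵢ aᵢ` with `qᵢ ≥ 0` and split off `∑ ⌊qᵢ⌋ aᵢ ∈ S`: the remainder lies in
`D = A ∩ {∑ fᵢ aᵢ : 0 ≤ fᵢ ≤ 1}`. The set `D` is finite, because in coordinates on the span of the
`aᵢ` the points of `A` have a common denominator while those of the unit parallelotope are
bounded. Every `d ∈ A` becomes an element of `S` after adding a suitable `s_d ∈ S` (which cancels
the negative coefficients of `d`), so `s = ∑_{d ∈ D} s_d` works for all of `D` at once.
-/

open Set Submodule

theorem Rat.exists_pos_nat_forall_mul_eq_intCast {κ : Type*} [Fintype κ] (c : κ → ℚ) :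
    ∃ N : ℕ, 0 < N ∧ ∀ k, ∃ z : ℤ, (N : ℚ) * c k = z := by
  refine ⟨∏ k, (c k).den, Finset.prod_pos fun k _ => (c k).den_pos, fun k => ?_⟩
  obtain ⟨e, he⟩ := Finset.dvd_prod_of_mem (fun k => (c k).den) (Finset.mem_univ k)
  refine ⟨(c k).num * e, ?_⟩
  rw [he]
  push_cast
  rw [mul_comm, ← mul_assoc, Rat.mul_den_eq_num]

theorem Rat.finite_setOf_mul_eq_intCast_abs_le {N : ℕ} (hN : 0 < N) (M : ℚ) :
    {q : ℚ | (∃ z : ℤ, (N : ℚ) * q = z) ∧ |q| ≤ M}.Finite := by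
  refine ((finite_Icc (-⌈N * M⌉) ⌈N * M⌉).image fun z : ℤ => (z : ℚ) / N).subset ?_
  rintro q ⟨⟨z, hz⟩, hq⟩
  have hN' : (0 : ℚ) < N := by exact_mod_cast hN
  refine ⟨z, ?_, by dsimp only; rw [← hz]; field_simp⟩
  have : |(z : ℚ)| ≤ ⌈N * M⌉ := by
    rw [← hz, abs_mul, Nat.abs_cast]
    exact (mul_le_mul_of_nonneg_left hq hN'.le).trans (Int.le_ceil _)
  exact abs_le.mp (by exact_mod_cast this)

theorem LinearMap.finite_image_intPoints_inter_image_unitCube {ι κ : Type*} [Fintype ι]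
    [Fintype κ] (T : (ι → ℚ) →ₗ[ℚ] κ → ℚ) :
    (T '' Set.range (fun m : ι → ℤ => fun i => (m i : ℚ)) ∩ T '' Icc 0 1).Finite := by
  classical
  set c : κ × ι → ℚ := fun p => T (fun j => if p.2 = j then 1 else 0) p.1
  have hT : ∀ v k, T v k = ∑ i, v i * c (k, i) := fun v k => by
    rw [T.pi_apply_eq_sum_univ v]
    simp [c]
  obtain ⟨N, hN, hc⟩ := Rat.exists_pos_nat_forall_mul_eq_intCast c
  refine (Set.Finite.pi fun k => Rat.finite_setOf_mul_eq_intCast_abs_le hN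
    (∑ i, |c (k, i)|)).subset ?_
  rintro _ ⟨⟨_, ⟨m, rfl⟩, rfl⟩, f, hf, hfm⟩ k -
  choose z hz using hc
  refine ⟨⟨∑ i, m i * z (k, i), ?_⟩, ?_⟩
  · rw [hT, Finset.mul_sum]
    push_cast
    simp_rw [← hz]
    exact Finset.sum_congr rfl fun i _ => by ring
  · rw [← hfm, hT]
    refine (Finset.abs_sum_le_sum_abs _ _).trans (Finset.sum_le_sum fun i _ => ?_)
    have hfi : |f i| ≤ 1 := abs_le.mpr ⟨(neg_nonpos.mpr zero_le_one).trans (hf.1 i), hf.2 i⟩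
    rw [abs_mul]
    exact mul_le_of_le_one_left (abs_nonneg _) hfi

theorem Submodule.exists_linearMap_pi_injOn {K V : Type*} [Field K] [AddCommGroup V]
    [Module K V] (W : Submodule K V) [FiniteDimensional K W] :
    ∃ (n : ℕ) (ψ : V →ₗ[K] Fin n → K), InjOn ψ W := by
  obtain ⟨g, hg⟩ := W.subtype.exists_leftInverse_of_injective W.ker_subtype
  refine ⟨_, (Module.finBasis K W).equivFun.toLinearMap ∘ₗ g, fun x hx y hy hxy => ?_⟩
  have hgx : g x = ⟨x, hx⟩ := LinearMap.congr_fun hg ⟨x, hx⟩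
  have hgy : g y = ⟨y, hy⟩ := LinearMap.congr_fun hg ⟨y, hy⟩
  have := (Module.finBasis K W).equivFun.injective hxy
  rw [hgx, hgy] at this
  exact congrArg Subtype.val this

theorem Submodule.exists_add_mem_span_nat_of_mem_span_int {M : Type*} [AddCommGroup M]
    {T : Set M} {x : M} (hx : x ∈ span ℤ T) : ∃ s ∈ span ℕ T, s + x ∈ span ℕ T := by
  rw [← mem_toAddSubgroup, span_int_eq_addSubgroupClosure] at hx
  induction hx using AddSubgroup.closure_induction with
  | mem x hx => exact ⟨0, zero_mem _, by simpa using subset_span hx⟩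
  | zero => exact ⟨0, zero_mem _, by simp⟩
  | add x y _ _ hx hy =>
    obtain ⟨s, hs, hsx⟩ := hx
    obtain ⟨t, ht, hty⟩ := hy
    exact ⟨s + t, add_mem hs ht, by rw [add_add_add_comm]; exact add_mem hsx hty⟩
  | neg x _ hx =>
    obtain ⟨s, hs, hsx⟩ := hx
    exact ⟨s + x, hsx, by simpa using hs⟩

theorem AddSubmonoid.exists_add_mem_of_finite {M : Type*} [AddCommMonoid M] (S : AddSubmonoid M)
    {D : Set M} (hD : D.Finite) (h : ∀ d ∈ D, ∃ s ∈ S, s + d ∈ S) :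
    ∃ s ∈ S, ∀ d ∈ D, s + d ∈ S := by
  induction D, hD using Set.Finite.induction_on with
  | empty => exact ⟨0, S.zero_mem, by simp⟩
  | @insert d D _ _ ih =>
    obtain ⟨s, hs, hsD⟩ := ih fun e he => h e (mem_insert_of_mem d he)
    obtain ⟨t, ht, htd⟩ := h d (mem_insert d D)
    refine ⟨t + s, add_mem ht hs, ?_⟩
    rintro e (rfl | he)
    · rw [add_right_comm]; exact add_mem htd hs
    · rw [add_assoc]; exact add_mem ht (hsD e he)

theorem inter_image_add_left_eq_image_add_left_inter {G S : Type*} [AddGroup G] [SetLike S G]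
    [AddSubgroupClass S G] {A : S} {s : G} (hs : s ∈ A) (C : Set G) :
    (A : Set G) ∩ (fun x => s + x) '' C = (fun x => s + x) '' (A ∩ C) := by
  ext x
  constructor
  · rintro ⟨hxA, y, hyC, rfl⟩
    exact ⟨y, ⟨by simpa using add_mem (neg_mem hs) hxA, hyC⟩, rfl⟩
  · rintro ⟨y, ⟨hyA, hyC⟩, rfl⟩
    exact ⟨add_mem hs hyA, y, hyC, rfl⟩

section Khovanskii

variable {B : Type*} [AddCommGroup B] [Module ℚ B] {ι : Type*} [Fintype ι] (a : ι → B)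

theorem setOf_exists_natCast_smul_sum_eq_span :
    {x : B | ∃ m : ι → ℕ, x = ∑ i, (m i : ℚ) • a i} = span ℕ (Set.range a) := by
  ext x
  simp [mem_span_range_iff_exists_fun, Nat.cast_smul_eq_nsmul, eq_comm]

theorem setOf_exists_intCast_smul_sum_eq_span :
    {x : B | ∃ m : ι → ℤ, x = ∑ i, (m i : ℚ) • a i} = span ℤ (Set.range a) := by
  ext x
  simp [mem_span_range_iff_exists_fun, Int.cast_smul_eq_zsmul, eq_comm]

theorem finite_span_int_inter_image_unitCube :
    ((span ℤ (Set.range a) : Set B) ∩ Fintype.linearCombination ℚ a '' Icc 0 1).Finite := by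
  set L := Fintype.linearCombination ℚ a
  obtain ⟨n, ψ, hψ⟩ := (LinearMap.range L).exists_linearMap_pi_injOn
  refine Set.Finite.of_finite_image ((ψ ∘ₗ L).finite_image_intPoints_inter_image_unitCube.subset ?_)
    (hψ.mono fun x hx => ?_)
  · rintro _ ⟨_, ⟨hA, f, hf, rfl⟩, rfl⟩
    obtain ⟨m, hm⟩ := (mem_span_range_iff_exists_fun ℤ).mp hA
    refine ⟨⟨_, ⟨m, rfl⟩, ?_⟩, f, hf, rfl⟩
    simp [L, Fintype.linearCombination_apply, Int.cast_smul_eq_zsmul, hm]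
  · obtain ⟨f, -, rfl⟩ := hx.2
    exact LinearMap.mem_range_self L f

theorem exists_add_mem_span_nat_of_nonneg_of_mem_span_int :
    ∃ s ∈ span ℕ (Set.range a), ∀ q : ι → ℚ, (∀ i, 0 ≤ q i) →
      ∑ i, q i • a i ∈ span ℤ (Set.range a) → s + ∑ i, q i • a i ∈ span ℕ (Set.range a) := by
  obtain ⟨s, hs, hsD⟩ := (span ℕ (Set.range a)).toAddSubmonoid.exists_add_mem_of_finite
    (finite_span_int_inter_image_unitCube a) fun d hd => exists_add_mem_span_nat_of_mem_span_int hd.1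
  refine ⟨s, hs, fun q hq hA => ?_⟩
  set t := ∑ i, ⌊q i⌋₊ • a i
  have ht : t ∈ span ℕ (Set.range a) :=
    sum_mem fun i _ => smul_mem _ _ (subset_span (mem_range_self i))
  have hd : ∑ i, q i • a i - t ∈
      (span ℤ (Set.range a) : Set B) ∩ Fintype.linearCombination ℚ a '' Icc 0 1 := by
    refine ⟨sub_mem hA (span_le_restrictScalars ℕ ℤ _ ht), fun i => q i - ⌊q i⌋₊,
      ⟨fun i => sub_nonneg.mpr (Nat.floor_le (hq i)),
        fun i => sub_le_iff_le_add'.mpr (Nat.lt_floor_add_one (q i)).le⟩, ?_⟩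
    simp [t, Fintype.linearCombination_apply, sub_smul, Nat.cast_smul_eq_nsmul]
  have hsum := add_mem (hsD _ hd) ht
  rwa [add_assoc, sub_add_cancel] at hsum

end Khovanskii

/-- Khovanskii's theorem: for a finite subset `a₁, …, a_r` of a `ℚ`-vector space, with `S` the
generated subsemigroup, `A` the generated subgroup and `C` the generated rational convex
cone, there is `s ∈ S` with `A ∩ (s + C) = s + (A ∩ C) ⊆ S ⊆ A ∩ C`. -/
theorem stmt8 (B : Type*) [AddCommGroup B] [Module ℚ B] (r : ℕ) (a : Fin r → B)
    (S A C : Set B)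
    (hS : S = {x : B | ∃ m : Fin r → ℕ, x = ∑ i, (m i : ℚ) • a i})
    (hA : A = {x : B | ∃ m : Fin r → ℤ, x = ∑ i, (m i : ℚ) • a i})
    (hC : C = {x : B | ∃ q : Fin r → ℚ, (∀ i, 0 ≤ q i) ∧ x = ∑ i, q i • a i}) :
    ∃ s ∈ S,
      A ∩ ((fun x => s + x) '' C) = (fun x => s + x) '' (A ∩ C) ∧
      (fun x => s + x) '' (A ∩ C) ⊆ S ∧
      S ⊆ A ∩ C := by
  have hSC : S ⊆ C := by
    rw [hS, hC]
    rintro _ ⟨m, rfl⟩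
    exact ⟨fun i => m i, fun i => Nat.cast_nonneg _, rfl⟩
  rw [setOf_exists_natCast_smul_sum_eq_span] at hS
  rw [setOf_exists_intCast_smul_sum_eq_span] at hA
  subst hS hA hC
  have hSA := span_le_restrictScalars ℕ ℤ (Set.range a)
  obtain ⟨s, hs, hsC⟩ := exists_add_mem_span_nat_of_nonneg_of_mem_span_int a
  have hsA : s ∈ span ℤ (Set.range a) := hSA hs
  refine ⟨s, hs, inter_image_add_left_eq_image_add_left_inter hsA _, ?_,
    fun x hx => ⟨hSA hx, hSC hx⟩⟩
  rintro _ ⟨_, ⟨hyA, q, hq, rfl⟩, rfl⟩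
  exact hsC q hq hyA
end

section
/- Let C be a nonempty open convex cone in ℝ^n, with closure cl(C). Then for every a ∈ ℝ^n: a ∈ cl(C) if and only if a + C ⊆ C, where a + C = {a + c : c ∈ C}. -/
/-- For a nonempty open convex cone `C` in `ℝⁿ`: `a` lies in the closure of `C` iff
`a + C ⊆ C`. -/
theorem stmt10 (n : ℕ) (C : Set (Fin n → ℝ)) (hne : C.Nonempty) (hopen : IsOpen C)
    (hconv : Convex ℝ C) (hcone : ∀ x ∈ C, ∀ t : ℝ, 0 < t → t • x ∈ C)
    (a : Fin n → ℝ) :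
    a ∈ closure C ↔ (fun c => a + c) '' C ⊆ C := by
  constructor
  · intro ha
    rintro _ ⟨c, hc, rfl⟩
    have hmid : (1/2 : ℝ) • c + (1/2 : ℝ) • a ∈ interior C :=
      hconv.combo_interior_closure_mem_interior (by rwa [hopen.interior_eq]) ha
        (by norm_num) (by norm_num) (by norm_num)
    rw [hopen.interior_eq] at hmid
    have h2 := hcone _ hmid 2 (by norm_num)
    have : (2 : ℝ) • ((1/2 : ℝ) • c + (1/2 : ℝ) • a) = a + c := by
      rw [smul_add, smul_smul, smul_smul]
      norm_num
      abel
    rwa [this] at h2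
  · intro h
    obtain ⟨c, hc⟩ := hne
    have key : ∀ t : ℝ, 0 < t → a + t • c ∈ C := fun t ht =>
      h ⟨t • c, hcone c hc t ht, rfl⟩
    have htend : Filter.Tendsto (fun t : ℝ => a + t • c) (nhdsWithin 0 (Set.Ioi 0)) (nhds a) := by
      have : Filter.Tendsto (fun t : ℝ => a + t • c) (nhds 0) (nhds (a + (0:ℝ) • c)) := by
        exact Filter.Tendsto.const_add _ ((Filter.tendsto_id.smul_const c))
      simpa using this.mono_left nhdsWithin_le_nhds
    exact mem_closure_of_tendsto htend
      (Filter.eventually_of_mem self_mem_nhdsWithin fun t ht => key t ht)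
end

section
/- Let n ≥ 2, let A be a set, and let f : Aⁿ → ℝ be a function that is symmetric (invariant under every permutation of its n arguments), strictly positive, and satisfies the reverse Cauchy–Schwarz inequality: f(a₁, …, a_{n−2}, b, c)² ≥ f(a₁, …, a_{n−2}, b, b) · f(a₁, …, a_{n−2}, c, c) for all a₁, …, a_{n−2}, b, c ∈ A. Then for all x₁, …, xₙ ∈ A: f(x₁, …, xₙ)ⁿ ≥ ∏_{i=1}^{n} f(xᵢ, xᵢ, …, xᵢ). More generally, for every 0 < k < n and all x₁, …, xₙ ∈ A: f(x₁, …, x_k, x_{k+1}, …, xₙ)^{n−k} ≥ ∏_{j=k+1}^{n} f(x₁, …, x_k, x_j, x_j, …, x_j), where in the j-th factor x_j is repeated n − k times. -/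
/-!
By symmetry, the reverse Cauchy–Schwarz inequality holds in any two argument slots. Fix the first
`k` arguments and write `m = n - k - 1`. For `j > k`, replacing the trailing `x_j`'s by `x_k` one
slot at a time gives a log-concave sequence from `f(x_{<k}, x_j, …, x_j)` to
`f(x_{<k}, x_k, …, x_k)`, so its total growth is at most `m + 1` times its first step:
`f(x_{<k}, x_j, …)^m · f(x_{<k}, x_k, …) ≤ f(x_{≤k}, x_j, …)^(m+1)`. Multiplying over `j > k` and
using the claim for `k + 1` gives the claim for `k` after taking `m`-th roots; `k = 0` is the
first inequality.
-/

section

open Function Finset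

lemma Equiv.Perm.exists_apply_eq_and_apply_eq {ι : Type*} [DecidableEq ι] {p q i j : ι}
    (hpq : p ≠ q) (hij : i ≠ j) : ∃ σ : Equiv.Perm ι, σ p = i ∧ σ q = j := by
  set τ := Equiv.swap p i
  have hτp : τ p = i := Equiv.swap_apply_left p i
  have hτq : τ q ≠ i := hτp ▸ τ.injective.ne hpq.symm
  refine ⟨τ.trans (Equiv.swap (τ q) j), ?_, Equiv.swap_apply_left _ _⟩
  simp only [Equiv.trans_apply, hτp]
  exact Equiv.swap_apply_of_ne_of_ne hτq.symm hij

def ReverseCauchySchwarz {ι A : Type*} [DecidableEq ι] (f : (ι → A) → ℝ) : Prop :=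
  ∀ i j : ι, i ≠ j → ∀ v : ι → A, f (update v j (v i)) * f (update v i (v j)) ≤ f v ^ 2

lemma reverseCauchySchwarz_of_perm_invariant {ι A : Type*} [DecidableEq ι]
    {f : (ι → A) → ℝ} (hsymm : ∀ (σ : Equiv.Perm ι) (x : ι → A), f (x ∘ σ) = f x)
    {p q : ι} (hpq : p ≠ q)
    (hCS : ∀ (a : ι → A) (b c : A),
      f (update (update a p b) q b) * f (update (update a p c) q c) ≤
        f (update (update a p b) q c) ^ 2) :
    ReverseCauchySchwarz f := by
  intro i j hij v
  obtain ⟨σ, hσp, hσq⟩ := Equiv.Perm.exists_apply_eq_and_apply_eq hpq hij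
  have hcomp : ∀ b c : A, update (update (v ∘ σ) p b) q c = update (update v i b) j c ∘ σ := by
    intro b c
    rw [update_comp_equiv, update_comp_equiv, ← hσp, ← hσq, Equiv.symm_apply_apply,
      Equiv.symm_apply_apply]
  have h := hCS (v ∘ σ) (v i) (v j)
  simp only [hcomp, hsymm, update_eq_self] at h
  rwa [update_comm hij, update_eq_self] at h

-- The ratios `a (t + 1) / a t` are nonincreasing.
lemma apply_succ_mul_apply_zero_le_of_sq_le {a : ℕ → ℝ} (ha : ∀ s, 0 < a s) {m : ℕ}
    (hconc : ∀ s < m, a s * a (s + 2) ≤ a (s + 1) ^ 2) :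
    ∀ t ≤ m, a (t + 1) * a 0 ≤ a 1 * a t := by
  intro t ht
  induction t with
  | zero => rw [mul_comm]
  | succ t ih =>
    refine le_of_mul_le_mul_left ?_ (ha t)
    calc a t * (a (t + 2) * a 0) = (a t * a (t + 2)) * a 0 := by ring
      _ ≤ a (t + 1) ^ 2 * a 0 := mul_le_mul_of_nonneg_right (hconc t ht) (ha 0).le
      _ = a (t + 1) * (a (t + 1) * a 0) := by ring
      _ ≤ a (t + 1) * (a 1 * a t) := mul_le_mul_of_nonneg_left (ih (by omega)) (ha _).le
      _ = a t * (a 1 * a (t + 1)) := by ring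

lemma apply_zero_pow_mul_le_apply_one_pow_of_sq_le {a : ℕ → ℝ} (ha : ∀ s, 0 < a s) {m : ℕ}
    (hconc : ∀ s < m, a s * a (s + 2) ≤ a (s + 1) ^ 2) :
    a 0 ^ m * a (m + 1) ≤ a 1 ^ (m + 1) := by
  suffices ∀ t ≤ m, a 0 ^ t * a (t + 1) ≤ a 1 ^ (t + 1) from this m le_rfl
  intro t ht
  induction t with
  | zero => simp
  | succ t ih =>
    calc a 0 ^ (t + 1) * a (t + 2) = a 0 ^ t * (a (t + 2) * a 0) := by ring
      _ ≤ a 0 ^ t * (a 1 * a (t + 1)) := mul_le_mul_of_nonneg_left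
          (apply_succ_mul_apply_zero_le_of_sq_le ha hconc (t + 1) ht) (pow_pos (ha 0) t).le
      _ = a 1 * (a 0 ^ t * a (t + 1)) := by ring
      _ ≤ a 1 * a 1 ^ (t + 1) := mul_le_mul_of_nonneg_left (ih (by omega)) (ha 1).le
      _ = a 1 ^ (t + 2) := by ring

variable {n : ℕ} {A : Type*}

def fillFrom (k : ℕ) (x : Fin n → A) (a : A) : Fin n → A :=
  fun i => if (i : ℕ) < k then x i else a

lemma fillFrom_zero (x : Fin n → A) (a : A) : fillFrom 0 x a = fun _ => a := rfl

lemma fillFrom_congr {k : ℕ} {x y : Fin n → A} (h : ∀ i : Fin n, (i : ℕ) < k → y i = x i)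
    (a : A) : fillFrom k y a = fillFrom k x a := by
  ext i
  simp only [fillFrom]
  split_ifs with hi
  exacts [h i hi, rfl]

lemma fillFrom_of_le {k : ℕ} (hk : n ≤ k) (x : Fin n → A) (a : A) : fillFrom k x a = x := by
  ext i
  simp [fillFrom, i.isLt.trans_le hk]

lemma fillFrom_last {k : ℕ} (hk : k + 1 = n) (x : Fin n → A) :
    fillFrom k x (x ⟨k, by omega⟩) = x := by
  ext i
  simp only [fillFrom, ite_eq_left_iff, not_lt]
  exact fun hi => congrArg x (Fin.ext (show k = (i : ℕ) by have := i.isLt; omega))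

lemma update_fillFrom_succ_eq_fillFrom {l : ℕ} (hl : l < n) (y : Fin n → A) (a : A) :
    update (fillFrom (l + 1) y a) ⟨l, hl⟩ a = fillFrom l y a := by
  ext i
  simp only [fillFrom, update_apply, Fin.ext_iff]
  split_ifs <;> first | rfl | omega

lemma update_fillFrom_succ_eq_fillFrom_add_two {l : ℕ} (hl : l + 1 < n) (y : Fin n → A) (a : A)
    (hy : y ⟨l, by omega⟩ = y ⟨l + 1, hl⟩) :
    update (fillFrom (l + 1) y a) ⟨l + 1, hl⟩ (y ⟨l, by omega⟩) = fillFrom (l + 2) y a := by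
  ext i
  simp only [fillFrom, update_apply, Fin.ext_iff]
  split_ifs with h1 h2 <;> try first | rfl | omega
  rw [hy]; exact congrArg y (Fin.ext h1.symm)

variable {f : (Fin n → A) → ℝ}

lemma fillFrom_mul_fillFrom_le_sq (hf : ReverseCauchySchwarz f) {l : ℕ} (hl : l + 1 < n)
    (y : Fin n → A) (a : A) (hy : y ⟨l, by omega⟩ = y ⟨l + 1, hl⟩) :
    f (fillFrom l y a) * f (fillFrom (l + 2) y a) ≤ f (fillFrom (l + 1) y a) ^ 2 := by
  have h := hf ⟨l, by omega⟩ ⟨l + 1, hl⟩ (by simp [Fin.ext_iff]) (fillFrom (l + 1) y a)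
  have hyl : fillFrom (l + 1) y a ⟨l, by omega⟩ = y ⟨l, by omega⟩ := if_pos (Nat.lt_succ_self l)
  have hal : fillFrom (l + 1) y a ⟨l + 1, hl⟩ = a := if_neg (lt_irrefl _)
  rw [hyl, hal, update_fillFrom_succ_eq_fillFrom_add_two hl y a hy,
    update_fillFrom_succ_eq_fillFrom] at h
  rwa [mul_comm] at h

lemma fillFrom_pow_mul_le_pow (hpos : ∀ x, 0 < f x) (hf : ReverseCauchySchwarz f) {k m : ℕ}
    (hkm : k + m + 1 = n) (x : Fin n → A) (a : A) :
    f (fillFrom k x a) ^ m * f (fillFrom k x (x ⟨k, by omega⟩)) ≤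
      f (fillFrom (k + 1) x a) ^ (m + 1) := by
  set y := fillFrom k x (x ⟨k, by omega⟩)
  have hyk : ∀ i : Fin n, k ≤ (i : ℕ) → y i = x ⟨k, by omega⟩ := fun i hi => if_neg (by omega)
  have hy : ∀ i : Fin n, (i : ℕ) < k + 1 → y i = x i := by
    intro i hi
    by_cases hik : (i : ℕ) < k
    · exact if_pos hik
    · rw [hyk i (by omega)]; exact congrArg x (Fin.ext (show k = (i : ℕ) by omega))
  have h := apply_zero_pow_mul_le_apply_one_pow_of_sq_le (a := fun s => f (fillFrom (k + s) y a))
    (fun s => hpos _) (m := m) fun s hs => fillFrom_mul_fillFrom_le_sq hf (l := k + s) (by omega)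
      y a ((hyk _ (by simp)).trans (hyk _ (by simp; omega)).symm)
  simp only [add_zero] at h
  rwa [fillFrom_congr (fun i hi => hy i (by omega)), fillFrom_congr hy,
    fillFrom_of_le (k := k + (m + 1)) (by omega)] at h

lemma Fin.card_filter_le_val (k : ℕ) :
    (univ.filter fun j : Fin n => k ≤ (j : ℕ)).card = n - k := by
  rw [filter_congr (q := fun j : Fin n => ¬ (j : ℕ) < k) (fun _ _ => not_lt.symm), filter_not,
    card_sdiff_of_subset (filter_subset _ _), Fin.card_filter_val_lt, card_univ, Fintype.card_fin]
  omega

lemma Fin.filter_le_val_eq_insert {k : ℕ} (hk : k < n) :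
    univ.filter (fun j : Fin n => k ≤ (j : ℕ)) =
      insert ⟨k, hk⟩ (univ.filter fun j : Fin n => k + 1 ≤ (j : ℕ)) := by
  ext j
  simp only [mem_filter, mem_univ, true_and, mem_insert, Fin.ext_iff]
  omega

lemma prod_fillFrom_le_pow (hpos : ∀ x, 0 < f x) (hf : ReverseCauchySchwarz f) {k : ℕ}
    (hk : k < n) (x : Fin n → A) :
    ∏ j ∈ univ.filter fun j : Fin n => k ≤ (j : ℕ), f (fillFrom k x (x j)) ≤ f x ^ (n - k) := by
  obtain ⟨m, hkm⟩ : ∃ m, k + m + 1 = n := ⟨n - (k + 1), by omega⟩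
  induction m generalizing k with
  | zero =>
    simp only [add_zero] at hkm
    have hempty : univ.filter (fun j : Fin n => k + 1 ≤ (j : ℕ)) = ∅ :=
      filter_false_of_mem fun j _ => by have := j.isLt; omega
    rw [Fin.filter_le_val_eq_insert hk, hempty, insert_empty, prod_singleton, fillFrom_last hkm,
      ← hkm, Nat.add_sub_cancel_left, pow_one]
  | succ m ih =>
    set T := univ.filter fun j : Fin n => k + 1 ≤ (j : ℕ)
    set D := f (fillFrom k x (x ⟨k, hk⟩))
    have hcard : T.card = m + 1 := by rw [Fin.card_filter_le_val]; omega
    have hP0 : 0 ≤ ∏ j ∈ T, f (fillFrom k x (x j)) := prod_nonneg fun _ _ => (hpos _).le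
    rw [Fin.filter_le_val_eq_insert hk, prod_insert (by simp), show n - k = m + 2 by omega,
      ← pow_le_pow_iff_left₀ (mul_nonneg (hpos _).le hP0) (pow_pos (hpos x) _).le m.succ_ne_zero]
    calc (D * ∏ j ∈ T, f (fillFrom k x (x j))) ^ (m + 1)
        = ∏ j ∈ T, (f (fillFrom k x (x j)) ^ (m + 1) * D) := by
          rw [prod_mul_distrib, Finset.prod_const, hcard, Finset.prod_pow, mul_pow, mul_comm]
      _ ≤ ∏ j ∈ T, f (fillFrom (k + 1) x (x j)) ^ (m + 2) :=
          prod_le_prod (fun _ _ => mul_nonneg (pow_pos (hpos _) _).le (hpos _).le)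
            fun j _ => fillFrom_pow_mul_le_pow hpos hf (by omega) x (x j)
      _ = (∏ j ∈ T, f (fillFrom (k + 1) x (x j))) ^ (m + 2) := Finset.prod_pow _ _ _
      _ ≤ (f x ^ (m + 1)) ^ (m + 2) := by
          gcongr
          · exact prod_nonneg fun _ _ => (hpos _).le
          · have h := ih (k := k + 1) (by omega) (by omega)
            rwa [show n - (k + 1) = m + 1 by omega] at h
      _ = (f x ^ (m + 2)) ^ (m + 1) := by rw [← pow_mul, ← pow_mul, mul_comm]

end

theorem stmt12_general (n : ℕ) (A : Type*) (f : (Fin n → A) → ℝ)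
    (hsymm : ∀ (σ : Equiv.Perm (Fin n)) (x : Fin n → A), f (x ∘ σ) = f x)
    (hpos : ∀ x : Fin n → A, 0 < f x)
    (p q : Fin n) (hp : (p : ℕ) = n - 2) (hq : (q : ℕ) = n - 1)
    (hCS : ∀ (a : Fin n → A) (b c : A),
      f (Function.update (Function.update a p b) q b) *
          f (Function.update (Function.update a p c) q c) ≤
        f (Function.update (Function.update a p b) q c) ^ 2) :
    (∀ x : Fin n → A, (∏ i, f (fun _ => x i)) ≤ f x ^ n) ∧
    (∀ k : ℕ, 0 < k → k < n → ∀ x : Fin n → A,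
      (∏ j ∈ Finset.univ.filter fun j : Fin n => k ≤ (j : ℕ),
        f (fun i => if (i : ℕ) < k then x i else x j)) ≤ f x ^ (n - k)) := by
  have hf : ReverseCauchySchwarz f := by
    intro i j hij
    have hpq : p ≠ q := by
      intro h
      have := i.isLt
      have := j.isLt
      rw [h] at hp
      exact hij (Fin.ext (by omega))
    exact reverseCauchySchwarz_of_perm_invariant hsymm hpq hCS i j hij
  refine ⟨fun x => ?_, fun k _ hk x => prod_fillFrom_le_pow hpos hf hk x⟩
  simpa only [fillFrom_zero, zero_le, Finset.filter_true, Nat.sub_zero] using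
    prod_fillFrom_le_pow hpos hf p.pos x

/-- Iterated reverse Cauchy–Schwarz: a symmetric positive function of `n` arguments
satisfying the reverse Cauchy–Schwarz inequality in its last two arguments satisfies
`f(x₁,…,xₙ)ⁿ ≥ ∏ᵢ f(xᵢ,…,xᵢ)`, and more generally the partial-diagonal inequality. -/
theorem stmt12 (n : ℕ) (hn : 2 ≤ n) (A : Type*) (f : (Fin n → A) → ℝ)
    (hsymm : ∀ (σ : Equiv.Perm (Fin n)) (x : Fin n → A), f (x ∘ σ) = f x)
    (hpos : ∀ x : Fin n → A, 0 < f x)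
    (p q : Fin n) (hp : (p : ℕ) = n - 2) (hq : (q : ℕ) = n - 1)
    (hCS : ∀ (a : Fin n → A) (b c : A),
      f (Function.update (Function.update a p b) q b) *
          f (Function.update (Function.update a p c) q c) ≤
        f (Function.update (Function.update a p b) q c) ^ 2) :
    (∀ x : Fin n → A, (∏ i, f (fun _ => x i)) ≤ f x ^ n) ∧
    (∀ k : ℕ, 0 < k → k < n → ∀ x : Fin n → A,
      (∏ j ∈ Finset.univ.filter fun j : Fin n => k ≤ (j : ℕ),
        f (fun i => if (i : ℕ) < k then x i else x j)) ≤ f x ^ (n - k)) :=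
  stmt12_general n A f hsymm hpos p q hp hq hCS
end

section
/- Let n ≥ 2, let V be a real vector space, let A ⊆ V be a nonempty convex cone (closed under addition and under multiplication by positive real scalars), and let f : Aⁿ → ℝ be symmetric (invariant under every permutation of its n arguments) and strictly positive, such that: (i) f is positively 1-homogeneous in each variable, i.e. f(t • a, x₂, …, xₙ) = t · f(a, x₂, …, xₙ) for all t > 0; (ii) for fixed x₂, …, xₙ ∈ A, the map x ↦ f(x, x₂, …, xₙ) is concave on A; and (iii) the reverse Cauchy–Schwarz inequality holds: f(a₁, …, a_{n−2}, b, c)² ≥ f(a₁, …, a_{n−2}, b, b) · f(a₁, …, a_{n−2}, c, c) for all a₁, …, a_{n−2}, b, c ∈ A. Define vol : A → ℝ by vol(a) = f(a, a, …, a). Then vol(a + b)^{1/n} ≥ vol(a)^{1/n} + vol(b)^{1/n} for all a, b ∈ A, and the function a ↦ vol(a)^{1/n} is concave on A. -/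
section StmtAux

set_option linter.unusedSectionVars false

lemma stmt13_upd_comp_swap {α : Type*} {n : ℕ} (x : Fin n → α) (i j : Fin n) (v : α) :
    (Function.update x i v) ∘ (Equiv.swap i j) = Function.update (x ∘ (Equiv.swap i j)) j v := by
  funext k
  rcases eq_or_ne k j with rfl | hk
  · show Function.update x i v (Equiv.swap i k k) = _
    rw [Equiv.swap_apply_right, Function.update_self, Function.update_self]
  · have h1 : Equiv.swap i j k ≠ i := by
      intro h
      apply hk
      have := congrArg (Equiv.swap i j) h
      rwa [Equiv.swap_apply_self, Equiv.swap_apply_left] at this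
    simp [Function.comp, Function.update_of_ne hk, Function.update_of_ne h1]

lemma stmt13_seq_ineq (n : ℕ) (W : ℕ → ℝ) (hWpos : ∀ k ≤ n, 0 < W k)
    (hlc : ∀ k, k + 2 ≤ n → W (k+2) * W k ≤ W (k+1)^2) :
    ∀ k m, k + m = n → W 0 ^ m * W n ^ k ≤ W k ^ n := by
  have pairwise : ∀ i d, i + d + 1 ≤ n → W (i + d + 1) * W i ≤ W (i + d) * W (i + 1) := by
    intro i d
    induction d with
    | zero => intro h; simp [mul_comm]
    | succ d ih =>
      intro h
      have h1 := ih (by omega)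
      have h2 := hlc (i + d) (by omega)
      have p0 := hWpos i (by omega)
      have p1 := hWpos (i+1) (by omega)
      have p2 := hWpos (i+d) (by omega)
      have p3 := hWpos (i+d+1) (by omega)
      have p4 := hWpos (i+d+2) (by omega)
      rw [show i + (d+1) + 1 = i + d + 2 by omega, show i + (d+1) = i + d + 1 by omega]
      have key : (W (i+d+2) * W i) * (W (i+d+1) * W (i+d)) ≤
          (W (i+d+1) * W (i+1)) * (W (i+d+1) * W (i+d)) := by
        calc (W (i+d+2) * W i) * (W (i+d+1) * W (i+d))
            = (W (i+d+2) * W (i+d)) * (W i * W (i+d+1)) := by ring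
          _ ≤ W (i+d+1)^2 * (W i * W (i+d+1)) := by
              apply mul_le_mul_of_nonneg_right h2 (by positivity)
          _ = W (i+d+1)^2 * (W (i+d+1) * W i) := by ring
          _ ≤ W (i+d+1)^2 * (W (i+d) * W (i+1)) := by
              apply mul_le_mul_of_nonneg_left h1 (by positivity)
          _ = (W (i+d+1) * W (i+1)) * (W (i+d+1) * W (i+d)) := by ring
      exact le_of_mul_le_mul_right key (by positivity)
  have D : ∀ k m, k + m ≤ n → W k ^ m * W (k+m) ≤ W (k+1) ^ m * W k := by
    intro k m
    induction m with
    | zero => intro h; simp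
    | succ m ih =>
      intro h
      have h1 := ih (by omega)
      have h2 := pairwise k m (by omega)
      have p1 := hWpos (k+1) (by omega)
      have pk : (0:ℝ) < W k ^ m := pow_pos (hWpos k (by omega)) m
      calc W k ^ (m+1) * W (k + (m+1)) = W k ^ m * (W (k+m+1) * W k) := by
            rw [show k + (m+1) = k+m+1 by omega]; ring
        _ ≤ W k ^ m * (W (k+m) * W (k+1)) := mul_le_mul_of_nonneg_left h2 pk.le
        _ = W (k+1) * (W k ^ m * W (k+m)) := by ring
        _ ≤ W (k+1) * (W (k+1) ^ m * W k) := mul_le_mul_of_nonneg_left h1 p1.le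
        _ = W (k+1) ^ (m+1) * W k := by ring
  intro k
  induction k with
  | zero => intro m hm; subst hm; simp
  | succ k ih =>
    intro m hm
    have hkn : k + (m+1) = n := by omega
    have ih' := ih (m+1) hkn
    have hD := D k (m+1) (by omega)
    have p0 := hWpos 0 (by omega)
    have pk := hWpos k (by omega)
    have pk1 := hWpos (k+1) (by omega)
    have pn := hWpos n (by omega)
    rw [show k + (m+1) = n from hkn] at hD
    have step : W k ^ m * W n ≤ W (k+1) ^ (m+1) := by
      have h' : (W k ^ m * W n) * W k ≤ W (k+1) ^ (m+1) * W k := by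
        calc (W k ^ m * W n) * W k = W k ^ (m+1) * W n := by ring
          _ ≤ _ := hD
      exact le_of_mul_le_mul_right h' pk
    refine le_of_pow_le_pow_left₀ (n := m+1) (by omega) (by positivity) ?_
    have e1 : (W (k + 1) ^ n) ^ (m+1) = (W (k+1) ^ (m+1)) ^ n := by
      rw [← pow_mul, ← pow_mul, Nat.mul_comm]
    have step2 : (W k ^ m * W n) ^ n ≤ (W (k+1) ^ (m+1)) ^ n :=
      pow_le_pow_left₀ (by positivity) step n
    have step3 : (W 0 ^ (m+1) * W n ^ k) ^ m * W n ^ n ≤ (W k ^ n) ^ m * W n ^ n :=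
      mul_le_mul_of_nonneg_right (pow_le_pow_left₀ (by positivity) ih' m) (by positivity)
    have e2 : (W k ^ m * W n) ^ n = (W k ^ n) ^ m * W n ^ n := by
      rw [mul_pow, ← pow_mul, ← pow_mul, Nat.mul_comm]
    have e3 : (W 0 ^ m * W n ^ (k+1)) ^ (m+1) = (W 0 ^ (m+1) * W n ^ k) ^ m * W n ^ n := by
      rw [← hm]; ring
    rw [e1, e3]
    calc (W 0 ^ (m+1) * W n ^ k) ^ m * W n ^ n ≤ (W k ^ n) ^ m * W n ^ n := step3
      _ = (W k ^ m * W n) ^ n := e2.symm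
      _ ≤ (W (k+1) ^ (m+1)) ^ n := step2

lemma stmt13_rpow_pow_inv (n : ℕ) (hn : n ≠ 0) (x : ℝ) (hx : 0 ≤ x) :
    (x ^ n) ^ ((n:ℝ)⁻¹) = x := by
  rw [← Real.rpow_natCast x n, ← Real.rpow_mul hx,
    mul_inv_cancel₀ (by exact_mod_cast hn), Real.rpow_one]

lemma stmt13_rpow_pow_comm (n m : ℕ) (x : ℝ) (hx : 0 ≤ x) :
    (x ^ m) ^ ((n:ℝ)⁻¹) = (x ^ ((n:ℝ)⁻¹)) ^ m := by
  rw [← Real.rpow_natCast x m, ← Real.rpow_natCast (x ^ ((n:ℝ)⁻¹)) m,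
    ← Real.rpow_mul hx, ← Real.rpow_mul hx, mul_comm]

variable {n : ℕ} {V : Type*} [AddCommGroup V] [Module ℝ V] {A : Set V} {f : (Fin n → V) → ℝ}

lemma stmt13_mem_update {x : Fin n → V} (hx : ∀ i, x i ∈ A) {v : V} (hv : v ∈ A) (j : Fin n) :
    ∀ i, Function.update x j v i ∈ A := by
  intro i
  rcases eq_or_ne i j with rfl | hi
  · simpa using hv
  · rw [Function.update_of_ne hi]; exact hx i

lemma stmt13_superadd
    (hAcone : ∀ x ∈ A, ∀ t : ℝ, 0 < t → t • x ∈ A)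
    (hsymm : ∀ (σ : Equiv.Perm (Fin n)) (x : Fin n → V), (∀ i, x i ∈ A) → f (x ∘ σ) = f x)
    (hhom : ∀ (x : Fin n → V), (∀ i, x i ∈ A) → ∀ (i : Fin n) (t : ℝ), 0 < t →
      f (Function.update x i (t • x i)) = t * f x)
    (i₀ : Fin n)
    (hconc : ∀ (x : Fin n → V), (∀ i, x i ∈ A) → ∀ a ∈ A, ∀ b ∈ A, ∀ s t : ℝ,
      0 ≤ s → 0 ≤ t → s + t = 1 →
      s * f (Function.update x i₀ a) + t * f (Function.update x i₀ b) ≤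
        f (Function.update x i₀ (s • a + t • b))) :
    ∀ (x : Fin n → V), (∀ i, x i ∈ A) → ∀ (i : Fin n), ∀ u ∈ A, ∀ v ∈ A, u + v ∈ A →
      f (Function.update x i u) + f (Function.update x i v) ≤
        f (Function.update x i (u + v)) := by
  have base : ∀ (x : Fin n → V), (∀ i, x i ∈ A) → ∀ u ∈ A, ∀ v ∈ A,
      f (Function.update x i₀ u) + f (Function.update x i₀ v) ≤
        f (Function.update x i₀ (u + v)) := by
    intro x hx u hu v hv
    have h2u : (2:ℝ) • u ∈ A := hAcone u hu 2 two_pos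
    have h2v : (2:ℝ) • v ∈ A := hAcone v hv 2 two_pos
    have key := hconc x hx ((2:ℝ) • u) h2u ((2:ℝ) • v) h2v (1/2) (1/2)
      (by norm_num) (by norm_num) (by norm_num)
    have e1 : ((1:ℝ)/2) • ((2:ℝ) • u) + ((1:ℝ)/2) • ((2:ℝ) • v) = u + v := by
      rw [smul_smul, smul_smul]; norm_num
    rw [e1] at key
    have hu2 : f (Function.update x i₀ ((2:ℝ) • u)) = 2 * f (Function.update x i₀ u) := by
      have := hhom (Function.update x i₀ u) (stmt13_mem_update hx hu i₀) i₀ 2 two_pos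
      rwa [Function.update_self, Function.update_idem] at this
    have hv2 : f (Function.update x i₀ ((2:ℝ) • v)) = 2 * f (Function.update x i₀ v) := by
      have := hhom (Function.update x i₀ v) (stmt13_mem_update hx hv i₀) i₀ 2 two_pos
      rwa [Function.update_self, Function.update_idem] at this
    rw [hu2, hv2] at key
    linarith
  intro x hx i u hu v hv hadd
  have hxs : ∀ k, (x ∘ (Equiv.swap i i₀)) k ∈ A := fun k => hx _
  have moveit : ∀ w, w ∈ A → f (Function.update x i w) =
      f (Function.update (x ∘ (Equiv.swap i i₀)) i₀ w) := by
    intro w hw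
    rw [← stmt13_upd_comp_swap x i i₀ w]
    exact (hsymm (Equiv.swap i i₀) (Function.update x i w) (stmt13_mem_update hx hw i)).symm
  rw [moveit u hu, moveit v hv, moveit (u+v) hadd]
  exact base _ hxs u hu v hv

lemma stmt13_expand
    (hsuper : ∀ (x : Fin n → V), (∀ i, x i ∈ A) → ∀ (i : Fin n), ∀ u ∈ A, ∀ v ∈ A, u + v ∈ A →
      f (Function.update x i u) + f (Function.update x i v) ≤
        f (Function.update x i (u + v)))
    {a b : V} (ha : a ∈ A) (hb : b ∈ A) (hab : a + b ∈ A) :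
    ∀ (T : Finset (Fin n)) (x : Fin n → V), (∀ i, x i ∈ A) →
      ∑ S ∈ T.powerset, f (fun i => if i ∈ S then b else if i ∈ T then a else x i)
        ≤ f (fun i => if i ∈ T then a + b else x i) := by
  intro T
  induction T using Finset.induction_on with
  | empty => intro x hx; simp
  | @insert j T' hj ih =>
    intro x hx
    rw [Finset.sum_powerset_insert hj, ← Finset.sum_add_distrib]
    set χ : Finset (Fin n) → (Fin n → V) :=
      fun S => fun i => if i ∈ S then b else if i ∈ T' then a else x i with hχ
    have hχmem : ∀ S, ∀ i, χ S i ∈ A := by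
      intro S i; simp only [hχ]; split_ifs
      · exact hb
      · exact ha
      · exact hx i
    have step1 : ∑ S ∈ T'.powerset,
        (f (fun i => if i ∈ S then b else if i ∈ insert j T' then a else x i) +
         f (fun i => if i ∈ insert j S then b else if i ∈ insert j T' then a else x i))
        ≤ ∑ S ∈ T'.powerset, f (Function.update (χ S) j (a + b)) := by
      apply Finset.sum_le_sum
      intro S hS
      have hjS : j ∉ S := fun h => hj (Finset.mem_powerset.mp hS h)
      have eqA : (fun i => if i ∈ S then b else if i ∈ insert j T' then a else x i) =
          Function.update (χ S) j a := by
        funext i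
        rcases eq_or_ne i j with rfl | hi
        · simp [hjS, hj, hχ]
        · simp [Function.update_of_ne hi, hχ, Finset.mem_insert, hi]
      have eqB : (fun i => if i ∈ insert j S then b else if i ∈ insert j T' then a else x i) =
          Function.update (χ S) j b := by
        funext i
        rcases eq_or_ne i j with rfl | hi
        · simp [hχ]
        · simp [Function.update_of_ne hi, hχ, Finset.mem_insert, hi]
      rw [eqA, eqB]
      exact hsuper (χ S) (hχmem S) j a ha b hb hab
    have step2 : ∑ S ∈ T'.powerset, f (Function.update (χ S) j (a + b)) ≤
        f (fun i => if i ∈ insert j T' then a + b else x i) := by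
      set x' : Fin n → V := Function.update x j (a + b) with hx'
      have hx'mem : ∀ i, x' i ∈ A := stmt13_mem_update hx hab j
      have eqC : ∀ S ∈ T'.powerset, Function.update (χ S) j (a + b) =
          fun i => if i ∈ S then b else if i ∈ T' then a else x' i := by
        intro S hS
        have hjS : j ∉ S := fun h => hj (Finset.mem_powerset.mp hS h)
        funext i
        rcases eq_or_ne i j with rfl | hi
        · simp [hjS, hj, hχ, hx']
        · simp [Function.update_of_ne hi, hχ, hx', hi]
      have eqD : (fun i => if i ∈ T' then a + b else x' i) =
          (fun i => if i ∈ insert j T' then a + b else x i) := by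
        funext i
        rcases eq_or_ne i j with rfl | hi
        · simp [hj, hx']
        · simp [hx', Function.update_of_ne hi, Finset.mem_insert, hi]
      calc ∑ S ∈ T'.powerset, f (Function.update (χ S) j (a + b))
          = ∑ S ∈ T'.powerset, f (fun i => if i ∈ S then b else if i ∈ T' then a else x' i) :=
            Finset.sum_congr rfl (fun S hS => congrArg f (eqC S hS))
        _ ≤ f (fun i => if i ∈ T' then a + b else x' i) := ih x' hx'mem
        _ = f (fun i => if i ∈ insert j T' then a + b else x i) := congrArg f eqD
    calc _ ≤ _ := step1
      _ ≤ _ := step2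

lemma stmt13_card_invariant
    (hsymm : ∀ (σ : Equiv.Perm (Fin n)) (x : Fin n → V), (∀ i, x i ∈ A) → f (x ∘ σ) = f x)
    {a b : V} (ha : a ∈ A) (hb : b ∈ A) (S S' : Finset (Fin n)) (h : S.card = S'.card) :
    f (fun i => if i ∈ S then b else a) = f (fun i => if i ∈ S' then b else a) := by
  classical
  have e : {x // x ∈ S'} ≃ {x // x ∈ S} := Finset.equivOfCardEq h.symm
  set σ : Equiv.Perm (Fin n) := e.extendSubtype with hσ
  have hmem : ∀ i, (fun i => if i ∈ S then b else a) i ∈ A := by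
    intro i; dsimp only; split_ifs; exacts [hb, ha]
  have key := hsymm σ (fun i => if i ∈ S then b else a) hmem
  have eq1 : ((fun i => if i ∈ S then b else a) ∘ σ) = (fun i => if i ∈ S' then b else a) := by
    funext i
    by_cases hi : i ∈ S'
    · have : σ i ∈ S := e.extendSubtype_mem i hi
      simp [Function.comp, this, hi]
    · have : σ i ∉ S := e.extendSubtype_not_mem i hi
      simp [Function.comp, this, hi]
  rw [eq1] at key
  exact key.symm

end StmtAux

/-- Log-concavity of the volume function of an `n`-th order hyperbolic form: for a symmetric,
positive, 1-homogeneous-in-each-variable, concave-in-each-variable function on a convex cone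
satisfying reverse Cauchy–Schwarz, `vol(a) = f(a,…,a)` satisfies
`vol(a+b)^{1/n} ≥ vol(a)^{1/n} + vol(b)^{1/n}` and `vol^{1/n}` is concave. -/
theorem stmt13 (n : ℕ) (hn : 2 ≤ n) (V : Type*) [AddCommGroup V] [Module ℝ V]
    (A : Set V) (hne : A.Nonempty)
    (hAadd : ∀ x ∈ A, ∀ y ∈ A, x + y ∈ A)
    (hAcone : ∀ x ∈ A, ∀ t : ℝ, 0 < t → t • x ∈ A)
    (f : (Fin n → V) → ℝ)
    (hsymm : ∀ (σ : Equiv.Perm (Fin n)) (x : Fin n → V), (∀ i, x i ∈ A) → f (x ∘ σ) = f x)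
    (hpos : ∀ x : Fin n → V, (∀ i, x i ∈ A) → 0 < f x)
    (hhom : ∀ (x : Fin n → V), (∀ i, x i ∈ A) → ∀ (i : Fin n) (t : ℝ), 0 < t →
      f (Function.update x i (t • x i)) = t * f x)
    (i₀ : Fin n) (hi₀ : (i₀ : ℕ) = 0)
    (hconc : ∀ (x : Fin n → V), (∀ i, x i ∈ A) → ∀ a ∈ A, ∀ b ∈ A, ∀ s t : ℝ,
      0 ≤ s → 0 ≤ t → s + t = 1 →
      s * f (Function.update x i₀ a) + t * f (Function.update x i₀ b) ≤
        f (Function.update x i₀ (s • a + t • b)))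
    (p q : Fin n) (hp : (p : ℕ) = n - 2) (hq : (q : ℕ) = n - 1)
    (hCS : ∀ (a : Fin n → V), (∀ i, a i ∈ A) → ∀ b ∈ A, ∀ c ∈ A,
      f (Function.update (Function.update a p b) q b) *
          f (Function.update (Function.update a p c) q c) ≤
        f (Function.update (Function.update a p b) q c) ^ 2) :
    (∀ a ∈ A, ∀ b ∈ A,
      f (fun _ => a) ^ ((n : ℝ)⁻¹) + f (fun _ => b) ^ ((n : ℝ)⁻¹) ≤
        f (fun _ => a + b) ^ ((n : ℝ)⁻¹)) ∧
    ConcaveOn ℝ A (fun a => f (fun _ => a) ^ ((n : ℝ)⁻¹)) := by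
  classical
  have hn0 : n ≠ 0 := by omega
  have hsuper := stmt13_superadd hAcone hsymm hhom i₀ hconc
  have hpq : p ≠ q := by
    intro h
    apply_fun Fin.val at h
    omega
  -- main inequality
  have main : ∀ a ∈ A, ∀ b ∈ A,
      f (fun _ => a) ^ ((n : ℝ)⁻¹) + f (fun _ => b) ^ ((n : ℝ)⁻¹) ≤
        f (fun _ => a + b) ^ ((n : ℝ)⁻¹) := by
    intro a ha b hb
    have hab : a + b ∈ A := hAadd a ha b hb
    set W : ℕ → ℝ := fun k => f (fun i => if (i:ℕ) < k then b else a) with hW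
    have Wpos : ∀ k ≤ n, 0 < W k := by
      intro k _
      rw [hW]
      refine hpos _ (fun i => ?_)
      by_cases h : (i:ℕ) < k
      · simpa [h] using hb
      · simpa [h] using ha
    have hWrep : ∀ k, k ≤ n → ∀ S : Finset (Fin n), S.card = k →
        f (fun i => if i ∈ S then b else a) = W k := by
      intro k hk S hS
      have hmemr : ∀ m ∈ Finset.range k, m < n := fun m hm =>
        lt_of_lt_of_le (Finset.mem_range.mp hm) hk
      have hcard : ((Finset.range k).attachFin hmemr).card = k := by
        rw [Finset.card_attachFin, Finset.card_range]
      have e1 : (fun i : Fin n => if (i:ℕ) < k then b else a) =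
          (fun i => if i ∈ (Finset.range k).attachFin hmemr then b else a) := by
        funext i
        simp [Finset.mem_attachFin, Finset.mem_range]
      rw [hW]
      dsimp only
      rw [e1]
      exact stmt13_card_invariant hsymm ha hb S _ (hS.trans hcard.symm)
    have W0 : W 0 = f (fun _ => a) := by
      rw [hW]
      exact congrArg f (funext fun i => by simp)
    have Wn : W n = f (fun _ => b) := by
      rw [hW]
      exact congrArg f (funext fun i => by simp [i.isLt])
    -- log-concavity of W
    have hlc : ∀ k, k + 2 ≤ n → W (k+2) * W k ≤ W (k+1)^2 := by
      intro k hk2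
      have hcard2 : ({p, q} : Finset (Fin n)).card = 2 := Finset.card_pair hpq
      have hcompl : ((Finset.univ : Finset (Fin n)) \ {p, q}).card = n - 2 := by
        rw [Finset.card_sdiff_of_subset (Finset.subset_univ _), hcard2, Finset.card_univ,
          Fintype.card_fin]
      obtain ⟨S₀, hS₀sub, hS₀card⟩ :=
        Finset.exists_subset_card_eq (s := (Finset.univ : Finset (Fin n)) \ {p, q}) (n := k)
          (by omega)
      have hpS₀ : p ∉ S₀ := fun h => by
        have := hS₀sub h
        simp [Finset.mem_sdiff] at this
      have hqS₀ : q ∉ S₀ := fun h => by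
        have := hS₀sub h
        simp [Finset.mem_sdiff] at this
      have hqp : q ≠ p := Ne.symm hpq
      set z : Fin n → V := fun i => if i ∈ S₀ then b else a with hz
      have hzmem : ∀ i, z i ∈ A := by
        intro i
        rw [hz]
        by_cases h : i ∈ S₀
        · simpa [h] using hb
        · simpa [h] using ha
      have key := hCS z hzmem b hb a ha
      have eq1 : Function.update (Function.update z p b) q b =
          fun i => if i ∈ insert q (insert p S₀) then b else a := by
        funext i
        rcases eq_or_ne i q with rfl | hiq
        · simp
        · rcases eq_or_ne i p with rfl | hip
          · simp [Function.update_of_ne hiq, Finset.mem_insert]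
          · simp [Function.update_of_ne hiq, Function.update_of_ne hip, hz,
              Finset.mem_insert, hiq, hip]
      have eq2 : Function.update (Function.update z p a) q a = z := by
        funext i
        rcases eq_or_ne i q with rfl | hiq
        · simp [hz, hqS₀]
        · rcases eq_or_ne i p with rfl | hip
          · simp [Function.update_of_ne hiq, hz, hpS₀]
          · simp [Function.update_of_ne hiq, Function.update_of_ne hip]
      have eq3 : Function.update (Function.update z p b) q a =
          fun i => if i ∈ insert p S₀ then b else a := by
        funext i
        rcases eq_or_ne i q with rfl | hiq
        · simp [Finset.mem_insert, hqp, hqS₀]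
        · rcases eq_or_ne i p with rfl | hip
          · simp [Function.update_of_ne hiq, Finset.mem_insert]
          · simp [Function.update_of_ne hiq, Function.update_of_ne hip, hz,
              Finset.mem_insert, hip]
      rw [eq1, eq2, eq3] at key
      have c1 : (insert p S₀).card = k + 1 := by
        rw [Finset.card_insert_of_notMem hpS₀, hS₀card]
      have hqins : q ∉ insert p S₀ := by
        simp [Finset.mem_insert, hqp, hqS₀]
      have c2 : (insert q (insert p S₀)).card = k + 2 := by
        rw [Finset.card_insert_of_notMem hqins, c1]
      rw [hz] at key
      rw [hWrep (k+2) (by omega) _ c2, hWrep k (by omega) S₀ hS₀card,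
        hWrep (k+1) (by omega) _ c1] at key
      exact key
    -- expansion
    have expand := stmt13_expand hsuper ha hb hab Finset.univ (fun _ => a) (fun _ => ha)
    simp only [Finset.mem_univ, if_true] at expand
    have regroup : ∑ S ∈ (Finset.univ : Finset (Fin n)).powerset,
        f (fun i => if i ∈ S then b else a)
        = ∑ k ∈ Finset.range (n+1), (n.choose k : ℝ) * W k := by
      rw [Finset.sum_powerset, Finset.card_univ, Fintype.card_fin]
      apply Finset.sum_congr rfl
      intro k hk
      have hk' : k ≤ n := by
        have := Finset.mem_range.mp hk
        omega
      have hconst : ∀ S ∈ Finset.powersetCard k (Finset.univ : Finset (Fin n)),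
          f (fun i => if i ∈ S then b else a) = W k := by
        intro S hS
        exact hWrep k hk' S (Finset.mem_powersetCard.mp hS).2
      rw [Finset.sum_congr rfl hconst, Finset.sum_const, Finset.card_powersetCard,
        Finset.card_univ, Fintype.card_fin, nsmul_eq_mul]
    set α := W 0 ^ ((n:ℝ)⁻¹) with hα
    set β := W n ^ ((n:ℝ)⁻¹) with hβ
    have hα0 : 0 ≤ α := Real.rpow_nonneg (Wpos 0 (by omega)).le _
    have hβ0 : 0 ≤ β := Real.rpow_nonneg (Wpos n le_rfl).le _
    have term_le : ∀ k ∈ Finset.range (n+1),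
        β ^ k * α ^ (n-k) * (n.choose k : ℝ) ≤ (n.choose k : ℝ) * W k := by
      intro k hk
      have hk' : k ≤ n := by
        have := Finset.mem_range.mp hk
        omega
      have hseq := stmt13_seq_ineq n W Wpos hlc k (n-k) (by omega)
      have h1 : (W 0 ^ (n-k) * W n ^ k) ^ ((n:ℝ)⁻¹) ≤ (W k ^ n) ^ ((n:ℝ)⁻¹) :=
        Real.rpow_le_rpow
          (mul_nonneg (pow_nonneg (Wpos 0 (by omega)).le _) (pow_nonneg (Wpos n le_rfl).le _))
          hseq (by positivity)
      rw [stmt13_rpow_pow_inv n hn0 _ (Wpos k hk').le] at h1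
      rw [Real.mul_rpow (pow_nonneg (Wpos 0 (by omega)).le _) (pow_nonneg (Wpos n le_rfl).le _),
        stmt13_rpow_pow_comm n _ _ (Wpos 0 (by omega)).le,
        stmt13_rpow_pow_comm n _ _ (Wpos n le_rfl).le] at h1
      calc β ^ k * α ^ (n-k) * (n.choose k:ℝ) = (n.choose k:ℝ) * (α ^ (n-k) * β ^ k) := by
            rw [hα, hβ]; ring
        _ ≤ (n.choose k:ℝ) * W k := by
            apply mul_le_mul_of_nonneg_left _ (by positivity)
            rw [hα, hβ]
            exact h1
    have binom : (α + β) ^ n ≤ f (fun _ => a + b) := by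
      rw [add_comm α β, add_pow]
      calc ∑ k ∈ Finset.range (n+1), β ^ k * α ^ (n-k) * (n.choose k:ℝ)
          ≤ ∑ k ∈ Finset.range (n+1), (n.choose k:ℝ) * W k := Finset.sum_le_sum term_le
        _ = ∑ S ∈ (Finset.univ : Finset (Fin n)).powerset,
              f (fun i => if i ∈ S then b else a) := regroup.symm
        _ ≤ f (fun _ => a + b) := expand
    have final := Real.rpow_le_rpow (pow_nonneg (add_nonneg hα0 hβ0) n) binom
      (by positivity : (0:ℝ) ≤ (n:ℝ)⁻¹)
    rw [stmt13_rpow_pow_inv n hn0 _ (add_nonneg hα0 hβ0)] at final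
    calc f (fun _ => a) ^ ((n:ℝ)⁻¹) + f (fun _ => b) ^ ((n:ℝ)⁻¹) = α + β := by
          rw [hα, hβ, W0, Wn]
      _ ≤ _ := final
  -- homogeneity of vol
  have homvol : ∀ c ∈ A, ∀ r : ℝ, 0 < r → f (fun _ => r • c) = r ^ n * f (fun _ => c) := by
    intro c hc r hr
    have claim : ∀ m, m ≤ n → f (fun i : Fin n => if (i:ℕ) < m then r • c else c)
        = r ^ m * f (fun _ => c) := by
      intro m
      induction m with
      | zero => intro _; simp
      | succ m ih =>
        intro hm
        have hmem : ∀ i : Fin n, (fun i : Fin n => if (i:ℕ) < m then r • c else c) i ∈ A := by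
          intro i
          dsimp only
          split_ifs
          exacts [hAcone c hc r hr, hc]
        have hh := hhom _ hmem ⟨m, by omega⟩ r hr
        simp only [lt_self_iff_false, if_false] at hh
        have hupd : Function.update (fun i : Fin n => if (i:ℕ) < m then r • c else c)
            ⟨m, by omega⟩ (r • c) = fun i : Fin n => if (i:ℕ) < m + 1 then r • c else c := by
          funext i
          rcases eq_or_ne i ⟨m, by omega⟩ with rfl | hi
          · simp
          · have hvne : (i:ℕ) ≠ m := fun h => hi (Fin.ext h)
            rw [Function.update_of_ne hi]
            by_cases h2 : (i:ℕ) < m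
            · have h3 : (i:ℕ) < m + 1 := by omega
              simp [h2, h3]
            · have h3 : ¬ (i:ℕ) < m + 1 := by omega
              simp [h2, h3]
        rw [hupd] at hh
        rw [hh, ih (by omega)]
        ring
    have e : (fun i : Fin n => if (i:ℕ) < n then r • c else c) = fun _ => r • c := by
      funext i
      simp [i.isLt]
    rw [← e, claim n le_rfl]
  have hconvex : Convex ℝ A := by
    intro x hx y hy s t hs ht hst
    rcases eq_or_lt_of_le hs with h | hs'
    · have ht1 : t = 1 := by linarith
      rw [← h, ht1]
      simpa using hy
    rcases eq_or_lt_of_le ht with h | ht'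
    · have hs1 : s = 1 := by linarith
      rw [← h, hs1]
      simpa using hx
    exact hAadd _ (hAcone x hx s hs') _ (hAcone y hy t ht')
  refine ⟨main, hconvex, ?_⟩
  intro x hx y hy s t hs ht hst
  simp only [smul_eq_mul]
  rcases eq_or_lt_of_le hs with h | hs'
  · have ht1 : t = 1 := by linarith
    rw [← h, ht1]
    simp
  rcases eq_or_lt_of_le ht with h | ht'
  · have hs1 : s = 1 := by linarith
    rw [← h, hs1]
    simp
  have hsx : s • x ∈ A := hAcone x hx s hs'
  have hty : t • y ∈ A := hAcone y hy t ht'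
  have key := main (s • x) hsx (t • y) hty
  have e1 : f (fun _ => s • x) ^ ((n:ℝ)⁻¹) = s * f (fun _ => x) ^ ((n:ℝ)⁻¹) := by
    rw [homvol x hx s hs', Real.mul_rpow (by positivity) (hpos _ (fun _ => hx)).le,
      stmt13_rpow_pow_inv n hn0 s hs'.le]
  have e2 : f (fun _ => t • y) ^ ((n:ℝ)⁻¹) = t * f (fun _ => y) ^ ((n:ℝ)⁻¹) := by
    rw [homvol y hy t ht', Real.mul_rpow (by positivity) (hpos _ (fun _ => hy)).le,
      stmt13_rpow_pow_inv n hn0 t ht'.le]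
  rw [e1, e2] at key
  exact key
end

section
/- Let V be a real vector space, let C ⊆ V be a nonempty convex cone (closed under addition and under multiplication by positive real scalars), and let f : C → ℝ be strictly positive and positively 1-homogeneous. Then f is concave on C if and only if log ∘ f is concave on C. -/
/-!
Concavity of `f` gives log-concavity since `log` is concave and increasing. Conversely,
rescaling `x` and `y` to the level set `{f = 1}` and applying log-concavity to the convex
combination with weights `f x / (f x + f y)` and `f y / (f x + f y)` shows that `f` is
superadditive; a homogeneous superadditive function on a cone is concave.
-/

open Real

section

variable {E : Type*} [AddCommMonoid E] [Module ℝ E] {s : Set E} {f : E → ℝ}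

theorem ConcaveOn.log (hf : ConcaveOn ℝ s f) (hpos : ∀ x ∈ s, 0 < f x) :
    ConcaveOn ℝ s (fun x => log (f x)) := by
  refine ⟨hf.1, fun x hx y hy a b ha hb hab => ?_⟩
  have hcomb_pos : 0 < a • f x + b • f y := convex_Ioi (0 : ℝ) (hpos x hx) (hpos y hy) ha hb hab
  calc a • Real.log (f x) + b • Real.log (f y) ≤ Real.log (a • f x + b • f y) :=
        strictConcaveOn_log_Ioi.concaveOn.2 (hpos x hx) (hpos y hy) ha hb hab
    _ ≤ Real.log (f (a • x + b • y)) := log_le_log hcomb_pos (hf.2 hx hy ha hb hab)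

variable (hsmul : ∀ x ∈ s, ∀ t : ℝ, 0 < t → t • x ∈ s)
  (hhom : ∀ x ∈ s, ∀ t : ℝ, 0 < t → f (t • x) = t * f x)
include hsmul hhom

theorem add_le_of_concaveOn_log (hf : ConcaveOn ℝ s (fun x => log (f x)))
    (hpos : ∀ x ∈ s, 0 < f x) {x y : E} (hx : x ∈ s) (hy : y ∈ s) :
    f x + f y ≤ f (x + y) := by
  have hfx := hpos x hx
  have hfy := hpos y hy
  set S := f x + f y
  have hS : 0 < S := by positivity
  have hx₁ : f ((f x)⁻¹ • x) = 1 := by rw [hhom x hx _ (by positivity), inv_mul_cancel₀ hfx.ne']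
  have hy₁ : f ((f y)⁻¹ • y) = 1 := by rw [hhom y hy _ (by positivity), inv_mul_cancel₀ hfy.ne']
  have hmid : (f x / S) • (f x)⁻¹ • x + (f y / S) • (f y)⁻¹ • y = S⁻¹ • (x + y) := by
    rw [smul_smul, smul_smul, smul_add]
    congr 2 <;> field_simp
  have hweights : f x / S + f y / S = 1 := by rw [← add_div, div_self hS.ne']
  have hu : (f x)⁻¹ • x ∈ s := hsmul x hx _ (by positivity)
  have hv : (f y)⁻¹ • y ∈ s := hsmul y hy _ (by positivity)
  have hmid_mem : S⁻¹ • (x + y) ∈ s := hmid ▸ hf.1 hu hv (by positivity) (by positivity) hweights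
  have hlog := hf.2 hu hv (by positivity) (by positivity) hweights
  simp only [hx₁, hy₁, log_one, smul_zero, add_zero, hmid] at hlog
  have hmid_ge : 1 ≤ f (S⁻¹ • (x + y)) := by
    rwa [← log_nonneg_iff (hpos _ hmid_mem)]
  calc S = S * 1 := (mul_one S).symm
    _ ≤ S * f (S⁻¹ • (x + y)) := by gcongr
    _ = f (x + y) := by rw [← hhom _ hmid_mem S hS, smul_inv_smul₀ hS.ne']

theorem concaveOn_of_add_le (hs : Convex ℝ s) (hsup : ∀ x ∈ s, ∀ y ∈ s, f x + f y ≤ f (x + y)) :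
    ConcaveOn ℝ s f := by
  refine concaveOn_iff_forall_pos.2 ⟨hs, fun x hx y hy a b ha hb _ => ?_⟩
  simpa only [hhom x hx a ha, hhom y hy b hb, smul_eq_mul]
    using hsup _ (hsmul x hx a ha) _ (hsmul y hy b hb)

end

theorem stmt14_general (V : Type*) [AddCommGroup V] [Module ℝ V] (C : Set V)
    (hadd : ∀ x ∈ C, ∀ y ∈ C, x + y ∈ C)
    (hcone : ∀ x ∈ C, ∀ t : ℝ, 0 < t → t • x ∈ C)
    (f : V → ℝ) (hpos : ∀ x ∈ C, 0 < f x)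
    (hhom : ∀ x ∈ C, ∀ t : ℝ, 0 < t → f (t • x) = t * f x) :
    ConcaveOn ℝ C f ↔ ConcaveOn ℝ C (fun x => Real.log (f x)) := by
  have hC : Convex ℝ C :=
    (⟨C, fun _ ht x hx => hcone x hx _ ht, fun x hx y hy => hadd x hx y hy⟩ : ConvexCone ℝ V).convex
  exact ⟨fun h => h.log hpos, fun h => concaveOn_of_add_le hcone hhom hC
    fun _ hx _ hy => add_le_of_concaveOn_log hcone hhom h hpos hx hy⟩

/-- For a strictly positive, positively 1-homogeneous function on a convex cone, concavity
is equivalent to log-concavity. -/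
theorem stmt14 (V : Type*) [AddCommGroup V] [Module ℝ V] (C : Set V) (hne : C.Nonempty)
    (hadd : ∀ x ∈ C, ∀ y ∈ C, x + y ∈ C)
    (hcone : ∀ x ∈ C, ∀ t : ℝ, 0 < t → t • x ∈ C)
    (f : V → ℝ) (hpos : ∀ x ∈ C, 0 < f x)
    (hhom : ∀ x ∈ C, ∀ t : ℝ, 0 < t → f (t • x) = t * f x) :
    ConcaveOn ℝ C f ↔ ConcaveOn ℝ C (fun x => Real.log (f x)) :=
  stmt14_general V C hadd hcone f hpos hhom
end

section
/- Let V be a real vector space with a symmetric bilinear form B, and suppose V is spanned by vectors v₁, …, vₙ. Let α₁, …, αₙ > 0 be positive reals and set f = Σᵢ αᵢ vᵢ. Assume B(vⱼ, f) = 0 for all j and B(vᵢ, vⱼ) ≥ 0 for all i ≠ j. Then B is negative semidefinite on V: B(x, x) ≤ 0 for all x ∈ V. Moreover, the radical {x ∈ V : B(x, y) = 0 for all y ∈ V} is equal to the linear span of the vectors Σ_{i ∈ c} αᵢ vᵢ, where c ranges over the connected components of the graph on {1, …, n} whose edges are the pairs {i, j} with i ≠ j and B(vᵢ, vⱼ)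 ≠ 0. -/
lemma sum_id_aux {N : ℕ} (b : Fin N → Fin N → ℝ) (hb : ∀ i j, b i j = b j i)
    (hrow : ∀ i, ∑ j, b i j = 0) (t : Fin N → ℝ) :
    ∑ i, ∑ j, b i j * t i * t j = -(1/2) * ∑ i, ∑ j, b i j * (t i - t j)^2 := by
  have hcol : ∀ j, ∑ i, b i j = 0 := fun j => by
    simp_rw [fun i => hb i j]; exact hrow j
  have e1 : ∑ i, ∑ j, b i j * t i ^ 2 = 0 := by
    refine Finset.sum_eq_zero fun i _ => ?_
    rw [← Finset.sum_mul, hrow, zero_mul]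
  have e2 : ∑ i, ∑ j, b i j * t j ^ 2 = 0 := by
    rw [Finset.sum_comm]
    refine Finset.sum_eq_zero fun j _ => ?_
    rw [← Finset.sum_mul, hcol, zero_mul]
  have expand : ∑ i, ∑ j, b i j * (t i - t j)^2
      = (∑ i, ∑ j, b i j * t i ^ 2) + (∑ i, ∑ j, b i j * t j ^ 2)
        - 2 * ∑ i, ∑ j, b i j * t i * t j := by
    rw [← Finset.sum_add_distrib, Finset.mul_sum, ← Finset.sum_sub_distrib]
    refine Finset.sum_congr rfl fun i _ => ?_
    rw [← Finset.sum_add_distrib, Finset.mul_sum, ← Finset.sum_sub_distrib]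
    refine Finset.sum_congr rfl fun j _ => ?_
    ring
  rw [expand, e1, e2]; ring

open scoped Classical in
/-- Zariski–Grothendieck type lemma: a symmetric bilinear form spanned by vectors `vᵢ` with
`B(vⱼ, f) = 0` for `f = Σ αᵢvᵢ` (`αᵢ > 0`) and `B(vᵢ, vⱼ) ≥ 0` for `i ≠ j` is negative
semidefinite, with radical spanned by the component sums `Σ_{i ∈ c} αᵢ vᵢ`. -/
theorem stmt15 (V : Type*) [AddCommGroup V] [Module ℝ V]
    (B : V →ₗ[ℝ] V →ₗ[ℝ] ℝ) (hsymm : ∀ x y, B x y = B y x)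
    (N : ℕ) (v : Fin N → V) (hspan : Submodule.span ℝ (Set.range v) = ⊤)
    (α : Fin N → ℝ) (hα : ∀ i, 0 < α i)
    (f : V) (hf : f = ∑ i, α i • v i)
    (hBf : ∀ j, B (v j) f = 0)
    (hBij : ∀ i j, i ≠ j → 0 ≤ B (v i) (v j))
    (G : SimpleGraph (Fin N))
    (hG : G = SimpleGraph.fromRel fun i j => B (v i) (v j) ≠ 0) :
    (∀ x : V, B x x ≤ 0) ∧
    {x : V | ∀ y : V, B x y = 0} =
      (Submodule.span ℝ {w : V | ∃ c : G.ConnectedComponent,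
        w = ∑ i ∈ Finset.univ.filter (fun i => G.connectedComponentMk i = c),
          α i • v i} : Set V) := by
  subst hf
  have hrow0 : ∀ i, ∑ j, α j * B (v i) (v j) = 0 := by
    intro i
    have := hBf i
    simpa [map_sum, map_smul, smul_eq_mul] using this
  -- the key identity
  have key : ∀ t : Fin N → ℝ,
      B (∑ i, (t i * α i) • v i) (∑ j, (t j * α j) • v j)
        = -(1/2) * ∑ i, ∑ j, (α i * α j * B (v i) (v j)) * (t i - t j)^2 := by
    intro t
    have lhs : B (∑ i, (t i * α i) • v i) (∑ j, (t j * α j) • v j)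
        = ∑ i, ∑ j, (α i * α j * B (v i) (v j)) * t i * t j := by
      simp only [map_sum, LinearMap.sum_apply, map_smul, LinearMap.smul_apply,
        smul_eq_mul, Finset.mul_sum]
      refine Finset.sum_congr rfl fun i _ => Finset.sum_congr rfl fun j _ => ?_
      rw [hsymm (v j) (v i)]; ring
    rw [lhs]
    refine sum_id_aux _ (fun i j => by rw [hsymm (v i) (v j)]; ring) (fun i => ?_) t
    have : ∑ j, α i * α j * B (v i) (v j) = α i * ∑ j, α j * B (v i) (v j) := by
      rw [Finset.mul_sum]; exact Finset.sum_congr rfl fun j _ => by ring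
    rw [this, hrow0, mul_zero]
  -- nonnegativity of the terms
  have hterm : ∀ (t : Fin N → ℝ) (i j : Fin N),
      0 ≤ (α i * α j * B (v i) (v j)) * (t i - t j)^2 := by
    intro t i j
    rcases eq_or_ne i j with rfl | h
    · simp
    · exact mul_nonneg (mul_nonneg (mul_nonneg (hα i).le (hα j).le) (hBij i j h))
        (sq_nonneg _)
  -- representation lemma
  have hrep : ∀ x : V, ∃ t : Fin N → ℝ, x = ∑ i, (t i * α i) • v i := by
    intro x
    have hx : x ∈ Submodule.span ℝ (Set.range v) := hspan ▸ Submodule.mem_top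
    obtain ⟨c, hc⟩ := (Submodule.mem_span_range_iff_exists_fun ℝ).mp hx
    refine ⟨fun i => c i / α i, ?_⟩
    rw [← hc]
    exact Finset.sum_congr rfl fun i _ => by
      rw [div_mul_cancel₀ _ (hα i).ne']
  have neg : ∀ x : V, B x x ≤ 0 := by
    intro x
    obtain ⟨t, rfl⟩ := hrep x
    rw [key t]
    have h0 : 0 ≤ ∑ i, ∑ j, (α i * α j * B (v i) (v j)) * (t i - t j)^2 :=
      Finset.sum_nonneg fun i _ => Finset.sum_nonneg fun j _ => hterm t i j
    linarith
  refine ⟨neg, ?_⟩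
  -- vanishing across components
  have hzero : ∀ i j : Fin N,
      G.connectedComponentMk i ≠ G.connectedComponentMk j → B (v i) (v j) = 0 := by
    intro i j hne
    by_contra hb0
    have hij : i ≠ j := fun h => hne (by rw [h])
    have hadj : G.Adj i j := by
      rw [hG, SimpleGraph.fromRel_adj]
      exact ⟨hij, Or.inl hb0⟩
    exact hne (SimpleGraph.ConnectedComponent.sound hadj.reachable)
  apply Set.Subset.antisymm
  · -- radical ⊆ span
    intro x hx
    have hxx : B x x = 0 := hx x
    obtain ⟨t, hxt⟩ := hrep x
    have hsum0 : ∑ i, ∑ j, (α i * α j * B (v i) (v j)) * (t i - t j)^2 = 0 := by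
      have := key t
      rw [← hxt, hxx] at this
      linarith
    have hall : ∀ i j, (α i * α j * B (v i) (v j)) * (t i - t j)^2 = 0 := by
      intro i j
      have h1 := (Finset.sum_eq_zero_iff_of_nonneg
        (fun i _ => Finset.sum_nonneg fun j _ => hterm t i j)).mp hsum0 i
        (Finset.mem_univ i)
      exact (Finset.sum_eq_zero_iff_of_nonneg
        (fun j _ => hterm t i j)).mp h1 j (Finset.mem_univ j)
    have hadjt : ∀ i j, G.Adj i j → t i = t j := by
      intro i j hadj
      rw [hG, SimpleGraph.fromRel_adj] at hadj
      obtain ⟨hij, hb0⟩ := hadj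
      have hb0' : B (v i) (v j) ≠ 0 := by
        rcases hb0 with h | h
        · exact h
        · rw [hsymm (v i) (v j)]; exact h
      have hαb : α i * α j * B (v i) (v j) ≠ 0 :=
        mul_ne_zero (mul_ne_zero (hα i).ne' (hα j).ne') hb0'
      have := hall i j
      have hsq : (t i - t j)^2 = 0 := by
        rcases mul_eq_zero.mp this with h | h
        · exact absurd h hαb
        · exact h
      have := pow_eq_zero_iff (n := 2) (by norm_num) |>.mp hsq
      linarith [this]
    have hwalk : ∀ (i j : Fin N) (p : G.Walk i j), t i = t j := by
      intro i j p
      induction p with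
      | nil => rfl
      | cons h p ih => exact (hadjt _ _ h).trans ih
    set T : G.ConnectedComponent → ℝ :=
      SimpleGraph.ConnectedComponent.lift t (fun i j p _ => hwalk i j p) with hT
    have hTmk : ∀ i, T (G.connectedComponentMk i) = t i := fun i => rfl
    have hx2 : x = ∑ cc : G.ConnectedComponent, T cc •
        ∑ i ∈ Finset.univ.filter (fun i => G.connectedComponentMk i = cc),
          α i • v i := by
      rw [hxt,
        ← Finset.sum_fiberwise Finset.univ (fun i => G.connectedComponentMk i)
          (fun i => (t i * α i) • v i)]
      refine Finset.sum_congr rfl fun cc _ => ?_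
      rw [Finset.smul_sum]
      refine Finset.sum_congr rfl fun i hi => ?_
      have hic : G.connectedComponentMk i = cc := (Finset.mem_filter.mp hi).2
      rw [smul_smul, ← hic, hTmk]
    rw [hx2]
    exact Submodule.sum_mem _ fun cc _ =>
      Submodule.smul_mem _ _ (Submodule.subset_span ⟨cc, rfl⟩)
  · -- span ⊆ radical
    have hgen : ∀ w ∈ {w : V | ∃ c : G.ConnectedComponent,
        w = ∑ i ∈ Finset.univ.filter (fun i => G.connectedComponentMk i = c),
          α i • v i}, ∀ y : V, B w y = 0 := by
      rintro w hw y
      obtain ⟨cc, hwcc⟩ := hw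
      have hy : y ∈ Submodule.span ℝ (Set.range v) := hspan ▸ Submodule.mem_top
      obtain ⟨d, rfl⟩ := (Submodule.mem_span_range_iff_exists_fun ℝ).mp hy
      have hwj : ∀ j : Fin N, B w (v j) = 0 := by
        intro j
        have expand : B w (v j)
            = ∑ i ∈ Finset.univ.filter (fun i => G.connectedComponentMk i = cc),
              α i * B (v j) (v i) := by
          rw [hwcc]
          simp only [map_sum, LinearMap.sum_apply, map_smul, LinearMap.smul_apply,
            smul_eq_mul]
          exact Finset.sum_congr rfl fun i _ => by rw [hsymm (v i) (v j)]
        rw [expand]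
        by_cases hj : G.connectedComponentMk j = cc
        · have : ∑ i ∈ Finset.univ.filter (fun i => G.connectedComponentMk i = cc),
              α i * B (v j) (v i) = ∑ i, α i * B (v j) (v i) := by
            apply Finset.sum_filter_of_ne
            intro i _ hne
            by_contra hic
            apply hne
            have : B (v j) (v i) = 0 := hzero j i (by rw [hj]; exact fun h => hic h.symm)
            rw [this, mul_zero]
          rw [this, hrow0 j]
        · refine Finset.sum_eq_zero fun i hi => ?_
          have hic : G.connectedComponentMk i = cc := (Finset.mem_filter.mp hi).2
          rw [hzero j i (by rw [hic]; exact hj), mul_zero]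
      have : B w (∑ j, d j • v j) = ∑ j, d j * B w (v j) := by
        rw [map_sum]
        exact Finset.sum_congr rfl fun j _ => by rw [map_smul, smul_eq_mul]
      rw [this]
      exact Finset.sum_eq_zero fun j _ => by rw [hwj j, mul_zero]
    have hle : Submodule.span ℝ {w : V | ∃ c : G.ConnectedComponent,
        w = ∑ i ∈ Finset.univ.filter (fun i => G.connectedComponentMk i = c),
          α i • v i} ≤ LinearMap.ker B :=
      Submodule.span_le.mpr fun w hw =>
        LinearMap.mem_ker.mpr (LinearMap.ext (hgen w hw))
    intro x hx y
    have hk := LinearMap.mem_ker.mp (hle hx)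
    rw [hk]
    rfl
end

section
/- Let n ≥ 2, let W be a real vector space, and let m : W^{n+1} → ℝ be a symmetric (n+1)-multilinear map (linear in each argument and invariant under permutations of its arguments). Assume m is nondegenerate: if w ∈ W satisfies m(x₁, …, xₙ, w) = 0 for all x₁, …, xₙ ∈ W, then w = 0. Let V be a linear subspace of W and let A ⊆ W be a subset of a single coset of V (that is, a − a′ ∈ V for all a, a′ ∈ A). Assume that for all a₁, …, a_{n−1} ∈ A, the bilinear form (v, v′) ↦ m(a₁, …, a_{n−1}, v, v′) is negative semidefinite on V. If a₁, a₂ ∈ A and c = a₁ − a₂ satisfy m(c, a₁, a₁, …, a₁) = m(c, a₂, a₂, …, a₂) (each of a₁, a₂ repeated n times), then for all e₁, …, e_{n−1} ∈ A and all v ∈ V: m(e₁, …, e_{n−1}, c, v) = 0. -/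
open Function

set_option linter.unusedSectionVars false

section CalabiAux

variable {n : ℕ} {W : Type*} [AddCommGroup W] [Module ℝ W]
variable {m : MultilinearMap ℝ (fun _ : Fin (n + 1) => W) ℝ}
variable {V : Submodule ℝ W} {A : Set W} [DecidableEq W]

private lemma updates_eq (hn : 2 ≤ n) {y f : Fin (n+1) → W} {u v : W}
    (hlow : ∀ i : Fin (n+1), (i:ℕ) < n - 1 → y i = f i)
    (hu : f ⟨n-1, by omega⟩ = u) (hv : f (Fin.last n) = v) :
    Function.update (Function.update y ⟨n-1, by omega⟩ u) (Fin.last n) v = f := by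
  funext i
  rcases Nat.lt_or_ge (i:ℕ) (n-1) with h | h
  · have h1 : i ≠ Fin.last n := Fin.ne_of_val_ne (show (i:ℕ) ≠ n by omega)
    have h2 : i ≠ (⟨n-1, by omega⟩ : Fin (n+1)) :=
      Fin.ne_of_val_ne (show (i:ℕ) ≠ n - 1 by omega)
    rw [Function.update_of_ne h1, Function.update_of_ne h2, hlow i h]
  · have hi := i.isLt
    rcases Nat.lt_or_ge (i:ℕ) n with h' | h'
    · have h1 : i = (⟨n-1, by omega⟩ : Fin (n+1)) := Fin.ext (show (i:ℕ) = n - 1 by omega)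
      have h2 : i ≠ Fin.last n := Fin.ne_of_val_ne (show (i:ℕ) ≠ n by omega)
      rw [Function.update_of_ne h2, h1, Function.update_self, ← hu]
    · have h1 : i = Fin.last n := Fin.ext (show (i:ℕ) = n by omega)
      rw [h1, Function.update_self, hv]

/-- negative semidefiniteness in double-update form -/
private lemma neg_diag (hn : 2 ≤ n)
    (hnegsd : ∀ a : Fin (n - 1) → W, (∀ i, a i ∈ A) → ∀ v ∈ V,
      m (fun i : Fin (n + 1) => if h : (i : ℕ) < n - 1 then a ⟨(i : ℕ), h⟩ else v) ≤ 0)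
    (y : Fin (n+1) → W) (hy : ∀ i : Fin (n+1), (i : ℕ) < n - 1 → y i ∈ A)
    (u : W) (hu : u ∈ V) :
    m (Function.update (Function.update y ⟨n-1, by omega⟩ u) (Fin.last n) u) ≤ 0 := by
  have h := hnegsd (fun j => y ⟨(j : ℕ), by have := j.2; omega⟩)
    (fun j => hy _ j.2) u hu
  have he : Function.update (Function.update y ⟨n-1, by omega⟩ u) (Fin.last n) u
      = (fun i : Fin (n + 1) => if h : (i : ℕ) < n - 1 then
          (fun j : Fin (n-1) => y ⟨(j : ℕ), by have := j.2; omega⟩) ⟨(i : ℕ), h⟩ else u) := by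
    apply updates_eq hn
    · intro i hi
      simp only [dif_pos hi]
    · rw [dif_neg (show ¬(n - 1 < n - 1) by omega)]
    · simp only [Fin.val_last]
      rw [dif_neg (show ¬(n < n - 1) by omega)]
  rwa [he]

/-- Cauchy–Schwarz step -/
private lemma cs_lemma (hn : 2 ≤ n)
    (hsymm : ∀ (σ : Equiv.Perm (Fin (n + 1))) (x : Fin (n + 1) → W), m (x ∘ σ) = m x)
    (y : Fin (n+1) → W)
    (hdiag : ∀ u ∈ V, m (Function.update (Function.update y ⟨n-1, by omega⟩ u) (Fin.last n) u) ≤ 0)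
    {c : W} (hcV : c ∈ V)
    (h0 : m (Function.update (Function.update y ⟨n-1, by omega⟩ c) (Fin.last n) c) = 0)
    {v : W} (hv : v ∈ V) :
    m (Function.update (Function.update y ⟨n-1, by omega⟩ c) (Fin.last n) v) = 0 := by
  have hPL : (⟨n-1, by omega⟩ : Fin (n+1)) ≠ Fin.last n :=
    Fin.ne_of_val_ne (show n - 1 ≠ n by omega)
  set P : Fin (n+1) := ⟨n-1, by omega⟩ with hP
  set L : Fin (n+1) := Fin.last n with hL
  let B : W → W → ℝ := fun u w => m (Function.update (Function.update y P u) L w)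
  have hB : ∀ u w, B u w = m (Function.update (Function.update y P u) L w) := fun _ _ => rfl
  have hcomm : ∀ u w, Function.update (Function.update y P u) L w
      = Function.update (Function.update y L w) P u := fun u w =>
    Function.update_comm hPL u w y
  have Badd_r : ∀ u w w', B u (w + w') = B u w + B u w' := fun u w w' =>
    m.map_update_add _ L w w'
  have Bsmul_r : ∀ (t:ℝ) u w, B u (t • w) = t * B u w := by
    intro t u w
    rw [hB, hB, m.map_update_smul _ L t w]; rfl
  have Badd_l : ∀ u u' w, B (u + u') w = B u w + B u' w := by
    intro u u' w
    rw [hB, hB, hB, hcomm, hcomm, hcomm, m.map_update_add]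
  have Bsmul_l : ∀ (t:ℝ) u w, B (t • u) w = t * B u w := by
    intro t u w
    rw [hB, hB, hcomm, hcomm, m.map_update_smul]; rfl
  have Bsymm : ∀ u w, B u w = B w u := by
    intro u w
    rw [hB, hB]
    have hs := hsymm (Equiv.swap P L) (Function.update (Function.update y P w) L u)
    rw [← hs]
    congr 1
    funext i
    simp only [Function.comp_apply]
    rcases eq_or_ne i P with rfl | hiP
    · rw [Equiv.swap_apply_left, Function.update_self, Function.update_of_ne hPL,
        Function.update_self]
    · rcases eq_or_ne i L with rfl | hiL
      · rw [Equiv.swap_apply_right, Function.update_of_ne hPL, Function.update_self,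
          Function.update_self]
      · rw [Equiv.swap_apply_of_ne_of_ne hiP hiL, Function.update_of_ne hiL,
          Function.update_of_ne hiP, Function.update_of_ne hiL, Function.update_of_ne hiP]
  -- quadratic argument
  have hq : B v v ≤ 0 := hdiag v hv
  have h0' : B c c = 0 := h0
  have key : ∀ t : ℝ, 2 * t * B c v + t^2 * B v v ≤ 0 := by
    intro t
    have h1 : B (c + t • v) (c + t • v) ≤ 0 := hdiag _ (V.add_mem hcV (V.smul_mem t hv))
    have h2 : B (c + t • v) (c + t • v)
        = B c c + 2 * t * B c v + t^2 * B v v := by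
      simp only [Badd_l, Badd_r, Bsmul_l, Bsmul_r, Bsymm v c]; ring
    rw [h2, h0'] at h1; linarith
  have hβ : B c v = 0 := by
    by_contra hne
    set q := B v v
    set β := B c v
    have hs : (0:ℝ) < 1 - q := by linarith
    have hE : 2*(β/(1-q))*β + (β/(1-q))^2*q = β^2 * (2 - q) / (1-q)^2 := by
      field_simp; ring
    have hle : β^2 * (2 - q) / (1-q)^2 ≤ 0 := by rw [← hE]; exact key _
    have hpos : 0 < β^2 * (2 - q) / (1-q)^2 := by
      apply div_pos
      · exact mul_pos (by positivity) (by linarith)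
      · positivity
    linarith
  exact hβ

/-- the "edge" terms (tuples with `c` in two slots, rest in `A`) are `≤ 0` -/
private lemma edge_le (hn : 2 ≤ n)
    (hsymm : ∀ (σ : Equiv.Perm (Fin (n + 1))) (x : Fin (n + 1) → W), m (x ∘ σ) = m x)
    (hnegsd : ∀ a : Fin (n - 1) → W, (∀ i, a i ∈ A) → ∀ v ∈ V,
      m (fun i : Fin (n + 1) => if h : (i : ℕ) < n - 1 then a ⟨(i : ℕ), h⟩ else v) ≤ 0)
    {c : W} (hcV : c ∈ V)
    (x : Fin (n+1) → W) (p : Fin (n+1)) (hp : (p : ℕ) < n)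
    (hx : ∀ i : Fin (n+1), (i:ℕ) < n → i ≠ p → x i ∈ A) :
    m (Function.update (Function.update x p c) (Fin.last n) c) ≤ 0 := by
  have hPval : ((⟨n-1, by omega⟩ : Fin (n+1)) : ℕ) = n - 1 := rfl
  set P : Fin (n+1) := ⟨n-1, by omega⟩ with hPdef
  set L : Fin (n+1) := Fin.last n with hLdef
  have hLval : (L : ℕ) = n := rfl
  have hpL : p ≠ L := Fin.ne_of_val_ne (by omega)
  have hPL : P ≠ L := Fin.ne_of_val_ne (by rw [hPval, hLval]; omega)
  set f := Function.update (Function.update x p c) L c with hf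
  set y := f ∘ Equiv.swap p P with hy
  have hmy : m y = m f := hsymm (Equiv.swap p P) f
  have hyP : y P = c := by
    rw [hy, Function.comp_apply, Equiv.swap_apply_right, hf, Function.update_of_ne hpL,
      Function.update_self]
  have hyL : y L = c := by
    rw [hy, Function.comp_apply, Equiv.swap_apply_of_ne_of_ne hpL.symm hPL.symm, hf,
      Function.update_self]
  have hyA : ∀ i : Fin (n+1), (i:ℕ) < n - 1 → y i ∈ A := by
    intro i hi
    have hiP : i ≠ P := Fin.ne_of_val_ne (by rw [hPval]; omega)
    have hiL : i ≠ L := Fin.ne_of_val_ne (by rw [hLval]; omega)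
    rcases eq_or_ne i p with rfl | hip
    · have hPp : P ≠ i := fun h => hiP h.symm
      rw [hy, Function.comp_apply, Equiv.swap_apply_left, hf, Function.update_of_ne hPL,
        Function.update_of_ne hPp]
      exact hx P (by rw [hPval]; omega) hPp
    · rw [hy, Function.comp_apply, Equiv.swap_apply_of_ne_of_ne hip hiP, hf,
        Function.update_of_ne hiL, Function.update_of_ne hip]
      exact hx i (by omega) hip
  have hres := neg_diag hn hnegsd y hyA c hcV
  have hupd : Function.update (Function.update y P c) L c = y :=
    updates_eq hn (fun i _ => rfl) hyP hyL
  rw [hupd, hmy] at hres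
  exact hres

/-- lower bound: value at the all-`a₁` pattern is smallest -/
private lemma low_bound (hn : 2 ≤ n)
    (hsymm : ∀ (σ : Equiv.Perm (Fin (n + 1))) (x : Fin (n + 1) → W), m (x ∘ σ) = m x)
    (hnegsd : ∀ a : Fin (n - 1) → W, (∀ i, a i ∈ A) → ∀ v ∈ V,
      m (fun i : Fin (n + 1) => if h : (i : ℕ) < n - 1 then a ⟨(i : ℕ), h⟩ else v) ≤ 0)
    {a₁ a₂ c : W} (hne : a₁ ≠ a₂) (hc : c = a₁ - a₂) (hcV : c ∈ V)
    (hA1 : a₁ ∈ A) (hA2 : a₂ ∈ A) :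
    ∀ (k : ℕ) (x : Fin (n+1) → W),
      (Finset.univ.filter (fun i : Fin (n+1) => (i:ℕ) < n ∧ x i = a₂)).card = k →
      (∀ i : Fin (n+1), (i:ℕ) < n → x i = a₁ ∨ x i = a₂) →
      m (Function.update (fun _ => a₁) (Fin.last n) c)
        ≤ m (Function.update x (Fin.last n) c) := by
  intro k
  induction k using Nat.strong_induction_on with
  | _ k IH =>
  intro x hcard hpat
  rcases Finset.eq_empty_or_nonempty
      (Finset.univ.filter (fun i : Fin (n+1) => (i:ℕ) < n ∧ x i = a₂)) with he | ⟨p, hpmem⟩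
  · have hx : Function.update x (Fin.last n) c
        = Function.update (fun _ => a₁) (Fin.last n) c := by
      funext i
      rcases eq_or_ne i (Fin.last n) with rfl | hne'
      · rw [Function.update_self, Function.update_self]
      · rw [Function.update_of_ne hne', Function.update_of_ne hne']
        have hi : (i:ℕ) < n := by
          have h1 := i.isLt
          have h2 : (i:ℕ) ≠ n := fun h => hne' (Fin.ext (by rw [h]; rfl))
          omega
        rcases hpat i hi with h | h
        · exact h
        · exfalso
          have : i ∈ Finset.univ.filter (fun i : Fin (n+1) => (i:ℕ) < n ∧ x i = a₂) := by
            simp [hi, h]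
          rw [he] at this
          simp at this
    rw [hx]
  · have hpmem' := hpmem
    rw [Finset.mem_filter] at hpmem'
    obtain ⟨-, hp1, hp2⟩ := hpmem'
    have hpL : p ≠ Fin.last n := Fin.ne_of_val_ne (show (p:ℕ) ≠ n by omega)
    set x' := Function.update x p a₁ with hx'
    -- the new filter set
    have hfe : Finset.univ.filter (fun i : Fin (n+1) => (i:ℕ) < n ∧ x' i = a₂)
        = (Finset.univ.filter (fun i : Fin (n+1) => (i:ℕ) < n ∧ x i = a₂)).erase p := by
      ext i
      simp only [Finset.mem_filter, Finset.mem_erase, Finset.mem_univ, true_and, hx',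
        Function.update_apply]
      constructor
      · rintro ⟨hi, hv⟩
        split_ifs at hv with h
        · exact absurd hv hne
        · exact ⟨h, hi, hv⟩
      · rintro ⟨hip, hi, hv⟩
        rw [if_neg hip]
        exact ⟨hi, hv⟩
    have hlt : (Finset.univ.filter (fun i : Fin (n+1) => (i:ℕ) < n ∧ x' i = a₂)).card < k := by
      rw [hfe, ← hcard]
      exact Finset.card_erase_lt_of_mem hpmem
    have hstep : m (Function.update x' (Fin.last n) c)
        ≤ m (Function.update x (Fin.last n) c) := by
      have hedge := edge_le hn hsymm hnegsd hcV x p hp1 (by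
        intro i hi hip
        rcases hpat i hi with h | h
        · rw [h]; exact hA1
        · rw [h]; exact hA2)
      set g := Function.update x (Fin.last n) c with hg
      have hsub := m.map_update_sub g p a₁ a₂
      rw [← hc] at hsub
      have e1 : Function.update g p a₂ = g := by
        have : a₂ = g p := by rw [hg, Function.update_of_ne hpL, hp2]
        rw [this, Function.update_eq_self]
      have e2 : Function.update g p a₁ = Function.update x' (Fin.last n) c := by
        rw [hg, Function.update_comm hpL.symm]
      have e3 : Function.update g p c
          = Function.update (Function.update x p c) (Fin.last n) c := by
        rw [hg, Function.update_comm hpL.symm]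
      rw [e1, e2, e3] at hsub
      linarith
    calc m (Function.update (fun _ => a₁) (Fin.last n) c)
        ≤ m (Function.update x' (Fin.last n) c) := by
          apply IH _ hlt x' rfl
          intro i hi
          rcases eq_or_ne i p with rfl | hip
          · left; rw [hx', Function.update_self]
          · rw [hx', Function.update_of_ne hip]; exact hpat i hi
      _ ≤ m (Function.update x (Fin.last n) c) := hstep

/-- upper bound: value at the all-`a₂` pattern is largest -/
private lemma high_bound (hn : 2 ≤ n)
    (hsymm : ∀ (σ : Equiv.Perm (Fin (n + 1))) (x : Fin (n + 1) → W), m (x ∘ σ) = m x)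
    (hnegsd : ∀ a : Fin (n - 1) → W, (∀ i, a i ∈ A) → ∀ v ∈ V,
      m (fun i : Fin (n + 1) => if h : (i : ℕ) < n - 1 then a ⟨(i : ℕ), h⟩ else v) ≤ 0)
    {a₁ a₂ c : W} (hne : a₁ ≠ a₂) (hc : c = a₁ - a₂) (hcV : c ∈ V)
    (hA1 : a₁ ∈ A) (hA2 : a₂ ∈ A) :
    ∀ (k : ℕ) (x : Fin (n+1) → W),
      (Finset.univ.filter (fun i : Fin (n+1) => (i:ℕ) < n ∧ x i = a₁)).card = k →
      (∀ i : Fin (n+1), (i:ℕ) < n → x i = a₁ ∨ x i = a₂) →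
      m (Function.update x (Fin.last n) c)
        ≤ m (Function.update (fun _ => a₂) (Fin.last n) c) := by
  intro k
  induction k using Nat.strong_induction_on with
  | _ k IH =>
  intro x hcard hpat
  rcases Finset.eq_empty_or_nonempty
      (Finset.univ.filter (fun i : Fin (n+1) => (i:ℕ) < n ∧ x i = a₁)) with he | ⟨p, hpmem⟩
  · have hx : Function.update x (Fin.last n) c
        = Function.update (fun _ => a₂) (Fin.last n) c := by
      funext i
      rcases eq_or_ne i (Fin.last n) with rfl | hne'
      · rw [Function.update_self, Function.update_self]
      · rw [Function.update_of_ne hne', Function.update_of_ne hne']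
        have hi : (i:ℕ) < n := by
          have h1 := i.isLt
          have h2 : (i:ℕ) ≠ n := fun h => hne' (Fin.ext (by rw [h]; rfl))
          omega
        rcases hpat i hi with h | h
        · exfalso
          have : i ∈ Finset.univ.filter (fun i : Fin (n+1) => (i:ℕ) < n ∧ x i = a₁) := by
            simp [hi, h]
          rw [he] at this
          simp at this
        · exact h
    rw [hx]
  · have hpmem' := hpmem
    rw [Finset.mem_filter] at hpmem'
    obtain ⟨-, hp1, hp2⟩ := hpmem'
    have hpL : p ≠ Fin.last n := Fin.ne_of_val_ne (show (p:ℕ) ≠ n by omega)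
    set x' := Function.update x p a₂ with hx'
    have hfe : Finset.univ.filter (fun i : Fin (n+1) => (i:ℕ) < n ∧ x' i = a₁)
        = (Finset.univ.filter (fun i : Fin (n+1) => (i:ℕ) < n ∧ x i = a₁)).erase p := by
      ext i
      simp only [Finset.mem_filter, Finset.mem_erase, Finset.mem_univ, true_and, hx',
        Function.update_apply]
      constructor
      · rintro ⟨hi, hv⟩
        split_ifs at hv with h
        · exact absurd hv hne.symm
        · exact ⟨h, hi, hv⟩
      · rintro ⟨hip, hi, hv⟩
        rw [if_neg hip]
        exact ⟨hi, hv⟩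
    have hlt : (Finset.univ.filter (fun i : Fin (n+1) => (i:ℕ) < n ∧ x' i = a₁)).card < k := by
      rw [hfe, ← hcard]
      exact Finset.card_erase_lt_of_mem hpmem
    have hstep : m (Function.update x (Fin.last n) c)
        ≤ m (Function.update x' (Fin.last n) c) := by
      have hedge := edge_le hn hsymm hnegsd hcV x p hp1 (by
        intro i hi hip
        rcases hpat i hi with h | h
        · rw [h]; exact hA1
        · rw [h]; exact hA2)
      set g := Function.update x (Fin.last n) c with hg
      have hsub := m.map_update_sub g p a₁ a₂
      rw [← hc] at hsub
      have e1 : Function.update g p a₁ = g := by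
        have : a₁ = g p := by rw [hg, Function.update_of_ne hpL, hp2]
        rw [this, Function.update_eq_self]
      have e2 : Function.update g p a₂ = Function.update x' (Fin.last n) c := by
        rw [hg, Function.update_comm hpL.symm]
      have e3 : Function.update g p c
          = Function.update (Function.update x p c) (Fin.last n) c := by
        rw [hg, Function.update_comm hpL.symm]
      rw [e1, e2, e3] at hsub
      linarith
    calc m (Function.update x (Fin.last n) c)
        ≤ m (Function.update x' (Fin.last n) c) := hstep
      _ ≤ m (Function.update (fun _ => a₂) (Fin.last n) c) := by
          apply IH _ hlt x' rfl
          intro i hi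
          rcases eq_or_ne i p with rfl | hip
          · right; rw [hx', Function.update_self]
          · rw [hx', Function.update_of_ne hip]; exact hpat i hi

/-- all edges vanish: tuples with pattern entries and `c` in two slots give `0` -/
private lemma edge_zero (hn : 2 ≤ n)
    (hsymm : ∀ (σ : Equiv.Perm (Fin (n + 1))) (x : Fin (n + 1) → W), m (x ∘ σ) = m x)
    (hnegsd : ∀ a : Fin (n - 1) → W, (∀ i, a i ∈ A) → ∀ v ∈ V,
      m (fun i : Fin (n + 1) => if h : (i : ℕ) < n - 1 then a ⟨(i : ℕ), h⟩ else v) ≤ 0)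
    {a₁ a₂ c : W} (hne : a₁ ≠ a₂) (hc : c = a₁ - a₂) (hcV : c ∈ V)
    (hA1 : a₁ ∈ A) (hA2 : a₂ ∈ A)
    (heq : m (Function.update (fun _ => a₁) 0 c) = m (Function.update (fun _ => a₂) 0 c))
    (x : Fin (n+1) → W) (hpat : ∀ i : Fin (n+1), (i:ℕ) < n → x i = a₁ ∨ x i = a₂)
    (p : Fin (n+1)) (hp : (p:ℕ) < n) :
    m (Function.update (Function.update x p c) (Fin.last n) c) = 0 := by
  have h0L : (0 : Fin (n+1)) ≠ Fin.last n :=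
    Fin.ne_of_val_ne (show 0 ≠ n by omega)
  -- endpoints agree
  have hswap : ∀ b : W, m (Function.update (fun _ => b) (Fin.last n) c)
      = m (Function.update (fun _ => b) 0 c) := by
    intro b
    have hs := hsymm (Equiv.swap 0 (Fin.last n)) (Function.update (fun _ => b) 0 c)
    rw [← hs]
    congr 1
    funext i
    rcases eq_or_ne i 0 with rfl | h0
    · rw [Function.comp_apply, Equiv.swap_apply_left, Function.update_of_ne h0L,
        Function.update_of_ne h0L.symm]
    · rcases eq_or_ne i (Fin.last n) with rfl | hL
      · rw [Function.comp_apply, Equiv.swap_apply_right, Function.update_self,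
          Function.update_self]
      · rw [Function.comp_apply, Equiv.swap_apply_of_ne_of_ne h0 hL,
          Function.update_of_ne hL, Function.update_of_ne h0]
  have hends : m (Function.update (fun _ => a₁) (Fin.last n) c)
      = m (Function.update (fun _ => a₂) (Fin.last n) c) := by
    rw [hswap, hswap, heq]
  have hpL : p ≠ Fin.last n := Fin.ne_of_val_ne (show (p:ℕ) ≠ n by omega)
  -- the two pattern tuples around the edge
  have hval : ∀ b : W, b ∈ A → b = a₁ ∨ b = a₂ →
      m (Function.update (Function.update x p b) (Fin.last n) c)
        = m (Function.update (fun _ => a₁) (Fin.last n) c) := by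
    intro b hbA hb
    have hpat' : ∀ i : Fin (n+1), (i:ℕ) < n →
        (Function.update x p b) i = a₁ ∨ (Function.update x p b) i = a₂ := by
      intro i hi
      rcases eq_or_ne i p with rfl | hip
      · rw [Function.update_self]; exact hb
      · rw [Function.update_of_ne hip]; exact hpat i hi
    have hlo := low_bound hn hsymm hnegsd hne hc hcV hA1 hA2 _ (Function.update x p b)
      rfl hpat'
    have hhi := high_bound hn hsymm hnegsd hne hc hcV hA1 hA2 _ (Function.update x p b)
      rfl hpat'
    rw [hends]
    rw [hends] at hlo
    linarith
  -- difference computation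
  set g := Function.update x (Fin.last n) c with hg
  have hsub := m.map_update_sub g p a₁ a₂
  rw [← hc] at hsub
  have e1 : Function.update g p a₁
      = Function.update (Function.update x p a₁) (Fin.last n) c := by
    rw [hg, Function.update_comm hpL.symm]
  have e2 : Function.update g p a₂
      = Function.update (Function.update x p a₂) (Fin.last n) c := by
    rw [hg, Function.update_comm hpL.symm]
  have e3 : Function.update g p c
      = Function.update (Function.update x p c) (Fin.last n) c := by
    rw [hg, Function.update_comm hpL.symm]
  rw [e1, e2, e3, hval a₁ hA1 (Or.inl rfl), hval a₂ hA2 (Or.inr rfl)] at hsub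
  rw [hsub]
  ring

/-- main induction on the set of slots that may hold arbitrary elements of `A` -/
private lemma main_ind (hn : 2 ≤ n)
    (hsymm : ∀ (σ : Equiv.Perm (Fin (n + 1))) (x : Fin (n + 1) → W), m (x ∘ σ) = m x)
    (hnegsd : ∀ a : Fin (n - 1) → W, (∀ i, a i ∈ A) → ∀ v ∈ V,
      m (fun i : Fin (n + 1) => if h : (i : ℕ) < n - 1 then a ⟨(i : ℕ), h⟩ else v) ≤ 0)
    (hcoset : ∀ a ∈ A, ∀ a' ∈ A, a - a' ∈ V)
    {a₁ a₂ c : W} (hne : a₁ ≠ a₂) (hc : c = a₁ - a₂) (hcV : c ∈ V)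
    (hA1 : a₁ ∈ A) (hA2 : a₂ ∈ A)
    (heq : m (Function.update (fun _ => a₁) 0 c) = m (Function.update (fun _ => a₂) 0 c)) :
    ∀ (k : ℕ) (F : Finset (Fin (n+1))) (x : Fin (n+1) → W), F.card = k →
      (∀ i : Fin (n+1), (i:ℕ) < n - 1 → x i ∈ A) →
      (∀ i : Fin (n+1), (i:ℕ) < n - 1 → i ∉ F → x i = a₁ ∨ x i = a₂) →
      x ⟨n-1, by omega⟩ = c → x (Fin.last n) = c → m x = 0 := by
  have hPval : ((⟨n-1, by omega⟩ : Fin (n+1)) : ℕ) = n - 1 := rfl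
  set P : Fin (n+1) := ⟨n-1, by omega⟩ with hPdef
  set L : Fin (n+1) := Fin.last n with hLdef
  have hLval : (L : ℕ) = n := rfl
  have hPL : P ≠ L := Fin.ne_of_val_ne (by rw [hPval, hLval]; omega)
  intro k
  induction k using Nat.strong_induction_on with
  | _ k IH =>
  intro F x hcard h1 h2 h3 h4
  rcases F.eq_empty_or_nonempty with rfl | ⟨p, hpF⟩
  · -- base case: pattern tuple with c, c at the end
    have hpat : ∀ i : Fin (n+1), (i:ℕ) < n →
        (Function.update x P a₁) i = a₁ ∨ (Function.update x P a₁) i = a₂ := by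
      intro i hi
      rcases eq_or_ne i P with rfl | hiP
      · left; rw [Function.update_self]
      · rw [Function.update_of_ne hiP]
        have hi' : (i:ℕ) < n - 1 := by
          have : (i:ℕ) ≠ n - 1 := fun h => hiP (Fin.ext (by rw [h, hPval]))
          omega
        exact h2 i hi' (by simp)
    have hez := edge_zero hn hsymm hnegsd hne hc hcV hA1 hA2 heq
      (Function.update x P a₁) hpat P (by rw [hPval]; omega)
    rw [Function.update_idem] at hez
    have ex1 : Function.update x P c = x := by
      rw [← h3]; exact Function.update_eq_self _ _
    have ex2 : Function.update x L c = x := by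
      rw [← h4]; exact Function.update_eq_self _ _
    rwa [ex1, ex2] at hez
  · -- inductive step
    have hlt : (F.erase p).card < k := by
      rw [← hcard]; exact Finset.card_erase_lt_of_mem hpF
    rcases Nat.lt_or_ge (p:ℕ) (n-1) with hp | hp
    · -- p is a relevant slot
      have hpP : p ≠ P := Fin.ne_of_val_ne (by rw [hPval]; omega)
      have hpL : p ≠ L := Fin.ne_of_val_ne (by rw [hLval]; omega)
      have hxpA : x p ∈ A := h1 p hp
      have hw : x p - a₂ ∈ V := hcoset _ hxpA _ hA2
      have hval : a₂ + (x p - a₂) = x p := by abel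
      have e1 : m x = m (Function.update x p a₂)
          + m (Function.update x p (x p - a₂)) := by
        conv_lhs => rw [← Function.update_eq_self p x, ← hval]
        exact m.map_update_add x p a₂ (x p - a₂)
      -- first term vanishes by IH
      have hT1 : m (Function.update x p a₂) = 0 := by
        apply IH _ hlt (F.erase p) _ rfl
        · intro i hi
          rcases eq_or_ne i p with rfl | hip
          · rw [Function.update_self]; exact hA2
          · rw [Function.update_of_ne hip]; exact h1 i hi
        · intro i hi hiF
          rcases eq_or_ne i p with rfl | hip
          · right; rw [Function.update_self]
          · rw [Function.update_of_ne hip]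
            exact h2 i hi (fun hmem => hiF (Finset.mem_erase.mpr ⟨hip, hmem⟩))
        · rw [Function.update_of_ne hpP.symm]; exact h3
        · rw [Function.update_of_ne hpL.symm]; exact h4
      -- second term: swap slot p with the last slot
      set z := (Function.update x p (x p - a₂)) ∘ Equiv.swap p L with hz
      have hT2eq : m (Function.update x p (x p - a₂)) = m z :=
        (hsymm (Equiv.swap p L) _).symm
      have hzp : z p = c := by
        rw [hz, Function.comp_apply, Equiv.swap_apply_left, Function.update_of_ne hpL.symm, h4]
      have hzL : z L = x p - a₂ := by
        rw [hz, Function.comp_apply, Equiv.swap_apply_right, Function.update_self]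
      have hzP : z P = c := by
        rw [hz, Function.comp_apply, Equiv.swap_apply_of_ne_of_ne hpP.symm hPL,
          Function.update_of_ne hpP.symm, h3]
      have hzi : ∀ i : Fin (n+1), (i:ℕ) < n - 1 → i ≠ p → z i = x i := by
        intro i hi hip
        have hiL : i ≠ L := Fin.ne_of_val_ne (by rw [hLval]; omega)
        rw [hz, Function.comp_apply, Equiv.swap_apply_of_ne_of_ne hip hiL,
          Function.update_of_ne hip]
      have hsplit2 : m z = m (Function.update z p a₁) - m (Function.update z p a₂) := by
        have hmz : m z = m (Function.update z p (a₁ - a₂)) := by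
          rw [← hc, ← hzp, Function.update_eq_self]
        rw [hmz]
        exact m.map_update_sub z p a₁ a₂
      have hzero : ∀ b : W, b ∈ A → (b = a₁ ∨ b = a₂) →
          m (Function.update z p b) = 0 := by
        intro b hbA hb12
        set y := Function.update z p b with hy
        have hyP : y P = c := by rw [hy, Function.update_of_ne hpP.symm]; exact hzP
        have hyL : y L = x p - a₂ := by rw [hy, Function.update_of_ne hpL.symm]; exact hzL
        have hyA : ∀ i : Fin (n+1), (i:ℕ) < n - 1 → y i ∈ A := by
          intro i hi
          rcases eq_or_ne i p with rfl | hip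
          · rw [hy, Function.update_self]; exact hbA
          · rw [hy, Function.update_of_ne hip, hzi i hi hip]; exact h1 i hi
        have hupd : Function.update (Function.update y P c) L (x p - a₂) = y :=
          updates_eq hn (fun i _ => rfl) hyP hyL
        have h0 : m (Function.update (Function.update y P c) L c) = 0 := by
          apply IH _ hlt (F.erase p) _ rfl
          · intro i hi
            have hiP : i ≠ P := Fin.ne_of_val_ne (by rw [hPval]; omega)
            have hiL : i ≠ L := Fin.ne_of_val_ne (by rw [hLval]; omega)
            rw [Function.update_of_ne hiL, Function.update_of_ne hiP]
            exact hyA i hi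
          · intro i hi hiF
            have hiP : i ≠ P := Fin.ne_of_val_ne (by rw [hPval]; omega)
            have hiL : i ≠ L := Fin.ne_of_val_ne (by rw [hLval]; omega)
            rw [Function.update_of_ne hiL, Function.update_of_ne hiP]
            rcases eq_or_ne i p with rfl | hip
            · rw [hy, Function.update_self]; exact hb12
            · rw [hy, Function.update_of_ne hip, hzi i hi hip]
              exact h2 i hi (fun hmem => hiF (Finset.mem_erase.mpr ⟨hip, hmem⟩))
          · rw [Function.update_of_ne hPL, Function.update_self]
          · rw [Function.update_self]
        have hcs := cs_lemma hn hsymm y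
          (fun u hu => neg_diag hn hnegsd y hyA u hu) hcV h0 hw
        rwa [hupd] at hcs
      rw [e1, hT1, hT2eq, hsplit2, hzero a₁ hA1 (Or.inl rfl), hzero a₂ hA2 (Or.inr rfl)]
      ring
    · -- p is an irrelevant slot: just erase it
      apply IH _ hlt (F.erase p) x rfl h1 _ h3 h4
      intro i hi hiF
      have hip : i ≠ p := Fin.ne_of_val_ne (by omega)
      exact h2 i hi (fun hmem => hiF (Finset.mem_erase.mpr ⟨hip, hmem⟩))

end CalabiAux

/-- Calabi uniqueness: for a nondegenerate symmetric `(n+1)`-multilinear form `m`, a subspace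
`V` and a subset `A` of a coset of `V` on which the induced bilinear forms are negative
semidefinite, if `a₁, a₂ ∈ A` satisfy `m(c, a₁ⁿ) = m(c, a₂ⁿ)` for `c = a₁ - a₂`, then
`m(e₁, …, e_{n-1}, c, v) = 0` for all `e₁, …, e_{n-1} ∈ A` and `v ∈ V`. -/
theorem stmt16 (n : ℕ) (hn : 2 ≤ n) (W : Type*) [AddCommGroup W] [Module ℝ W]
    (m : MultilinearMap ℝ (fun _ : Fin (n + 1) => W) ℝ)
    (hsymm : ∀ (σ : Equiv.Perm (Fin (n + 1))) (x : Fin (n + 1) → W), m (x ∘ σ) = m x)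
    (hnd : ∀ w : W,
      (∀ x : Fin (n + 1) → W, m (Function.update x (Fin.last n) w) = 0) → w = 0)
    (V : Submodule ℝ W) (A : Set W)
    (hcoset : ∀ a ∈ A, ∀ a' ∈ A, a - a' ∈ V)
    (hnegsd : ∀ a : Fin (n - 1) → W, (∀ i, a i ∈ A) → ∀ v ∈ V,
      m (fun i : Fin (n + 1) => if h : (i : ℕ) < n - 1 then a ⟨(i : ℕ), h⟩ else v) ≤ 0)
    (a₁ a₂ : W) (ha₁ : a₁ ∈ A) (ha₂ : a₂ ∈ A) (c : W) (hc : c = a₁ - a₂)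
    (heq : m (Function.update (fun _ => a₁) 0 c) = m (Function.update (fun _ => a₂) 0 c)) :
    ∀ e : Fin (n - 1) → W, (∀ i, e i ∈ A) → ∀ v ∈ V,
      m (fun i : Fin (n + 1) =>
        if h : (i : ℕ) < n - 1 then e ⟨(i : ℕ), h⟩
        else if (i : ℕ) = n - 1 then c else v) = 0 := by
  haveI : DecidableEq W := Classical.decEq W
  intro e he v hv
  by_cases hc0 : c = 0
  · refine m.map_coord_zero (⟨n-1, by omega⟩ : Fin (n+1)) ?_
    rw [dif_neg (show ¬(n - 1 < n - 1) by omega), if_pos rfl, hc0]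
  · have hne : a₁ ≠ a₂ := fun h => hc0 (by rw [hc, h, sub_self])
    have hcV : c ∈ V := hc ▸ hcoset a₁ ha₁ a₂ ha₂
    set y := fun i : Fin (n+1) => if h : (i:ℕ) < n - 1 then e ⟨(i:ℕ), h⟩ else c with hy
    have hyA : ∀ i : Fin (n+1), (i:ℕ) < n - 1 → y i ∈ A := by
      intro i hi
      simp only [hy]
      rw [dif_pos hi]
      exact he _
    have hupd : Function.update (Function.update y ⟨n-1, by omega⟩ c) (Fin.last n) v
        = (fun i : Fin (n + 1) =>
            if h : (i : ℕ) < n - 1 then e ⟨(i : ℕ), h⟩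
            else if (i : ℕ) = n - 1 then c else v) := by
      apply updates_eq hn
      · intro i hi
        simp only [hy]
        rw [dif_pos hi, dif_pos hi]
      · rw [dif_neg (show ¬(n - 1 < n - 1) by omega), if_pos rfl]
      · simp only [Fin.val_last]
        rw [dif_neg (show ¬(n < n - 1) by omega), if_neg (show ¬(n = n - 1) by omega)]
    rw [← hupd]
    have hPL : (⟨n-1, by omega⟩ : Fin (n+1)) ≠ Fin.last n :=
      Fin.ne_of_val_ne (show n - 1 ≠ n by omega)
    refine cs_lemma hn hsymm y (fun u hu => neg_diag hn hnegsd y hyA u hu) hcV ?_ hv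
    apply main_ind hn hsymm hnegsd hcoset hne hc hcV ha₁ ha₂ heq
      Finset.univ.card Finset.univ _ rfl
    · intro i hi
      have hiP : i ≠ (⟨n-1, by omega⟩ : Fin (n+1)) :=
        Fin.ne_of_val_ne (show (i:ℕ) ≠ n - 1 by omega)
      have hiL : i ≠ Fin.last n :=
        Fin.ne_of_val_ne (show (i:ℕ) ≠ n by omega)
      rw [Function.update_of_ne hiL, Function.update_of_ne hiP]
      exact hyA i hi
    · intro i hi hiF
      exact absurd (Finset.mem_univ i) hiF
    · rw [Function.update_of_ne hPL, Function.update_self]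
    · rw [Function.update_self]
end

section
/- Let k ⊆ K be a field extension, let Γ₀ be a linearly ordered commutative group with zero, and let v : K → Γ₀ be a valuation on K that is trivial on k, i.e. v(c) = 1 for every nonzero c ∈ k. Let H be a k-linear subspace of K of finite dimension e. Then the image v(H ∖ {0}) = {v(h) : h ∈ H, h ≠ 0} is a set of cardinality at most e. If moreover the residue field of v is k, in the sense that for every x ∈ K with v(x) ≤ 1 there exists c ∈ k with v(x − c) < 1, then v(H ∖ {0}) has cardinality exactly e. -/
/-!
Elements of `H` with pairwise distinct values are linearly independent over `k`: in a vanishing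
combination the term of largest value would dominate. So choosing one element of `H` for each value
gives an independent family, and there are at most `e` values. When the residue field is `k`, this
family also spans `H`: for `x ∈ H` and `y` in the family with `v y = v x` there is `c ∈ k` with
`v (x - c • y) < v x`, so an element of `H` outside the span of minimal value cannot exist.
-/

open Submodule

namespace Valuation

variable {k K Γ₀ : Type*} [Field k] [Field K] [Algebra k K] [LinearOrderedCommGroupWithZero Γ₀]
  (v : Valuation K Γ₀)

theorem map_smul_of_ne_zero (htriv : ∀ c : k, c ≠ 0 → v (algebraMap k K c) = 1)
    {c : k} (hc : c ≠ 0) (x : K) : v (c • x) = v x := by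
  rw [Algebra.smul_def, v.map_mul, htriv c hc, one_mul]

theorem linearIndependent_of_injective_comp (htriv : ∀ c : k, c ≠ 0 → v (algebraMap k K c) = 1)
    {ι : Type*} {f : ι → K} (hf : ∀ i, f i ≠ 0) (hinj : Function.Injective (v ∘ f)) :
    LinearIndependent k f := by
  classical
  rw [linearIndependent_iff']
  intro s g hsum i hi
  by_contra hgi
  set t := s.filter (fun j => g j ≠ 0)
  obtain ⟨j, hjt, hmax⟩ := t.exists_max_image (fun j => v (f j)) ⟨i, Finset.mem_filter.mpr ⟨hi, hgi⟩⟩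
  have hgj : g j ≠ 0 := (Finset.mem_filter.mp hjt).2
  have hsum_t : ∑ i ∈ t, g i • f i = 0 := by
    rw [← hsum]
    exact Finset.sum_filter_of_ne fun x _ hx h => hx (by rw [h, zero_smul])
  have hdom : v (∑ i ∈ t, g i • f i) = v (f j) := by
    rw [v.map_sum_eq_of_lt hjt, v.map_smul_of_ne_zero htriv hgj]
    intro l hl
    obtain ⟨hlt, hlj⟩ := Finset.mem_sdiff.mp hl
    rw [v.map_smul_of_ne_zero htriv (Finset.mem_filter.mp hlt).2, v.map_smul_of_ne_zero htriv hgj]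
    exact (hmax l hlt).lt_of_ne fun h => hlj (Finset.mem_singleton.mpr (hinj h))
  rw [hsum_t, v.map_zero] at hdom
  exact hf j ((v.zero_iff).mp hdom.symm)

theorem le_span_of_forall_exists_map_eq
    (hres : ∀ x : K, v x ≤ 1 → ∃ c : k, v (x - algebraMap k K c) < 1)
    {H : Submodule k K} {ι : Type*} [Finite ι] {f : ι → K} (hfH : ∀ i, f i ∈ H)
    (hval : ∀ x ∈ H, x ≠ 0 → ∃ i, v (f i) = v x) :
    H ≤ span k (Set.range f) := by
  set W := span k (Set.range f)
  by_contra hHW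
  set T := {x | x ∈ H ∧ x ∉ W}
  have hT : T.Nonempty := Set.not_subset.mp hHW
  have hvT : (v '' T).Finite := (Set.finite_range (v ∘ f)).subset <| by
    rintro _ ⟨x, ⟨hxH, hxW⟩, rfl⟩
    obtain ⟨i, hi⟩ := hval x hxH fun h => hxW (h ▸ W.zero_mem)
    exact ⟨i, hi⟩
  obtain ⟨_, ⟨x, ⟨hxH, hxW⟩, rfl⟩, hmin⟩ := Set.exists_min_image (v '' T) id hvT (hT.image v)
  have hx0 : x ≠ 0 := fun h => hxW (h ▸ W.zero_mem)
  obtain ⟨i, hi⟩ := hval x hxH hx0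
  have hfi0 : v (f i) ≠ 0 := hi ▸ v.ne_zero_iff.mpr hx0
  obtain ⟨c, hc⟩ := hres (x * (f i)⁻¹) (by rw [v.map_mul, map_inv₀, hi, mul_inv_cancel₀ (hi ▸ hfi0)])
  have hfiW : f i ∈ W := subset_span ⟨i, rfl⟩
  have hlt : v (x - c • f i) < v x := by
    have : x - c • f i = (x * (f i)⁻¹ - algebraMap k K c) * f i := by
      rw [Algebra.smul_def, sub_mul, inv_mul_cancel_right₀ (v.ne_zero_iff.mp hfi0)]
    rw [this, v.map_mul, hi]
    simpa using mul_lt_mul_of_pos_right hc (zero_lt_iff.mpr (hi ▸ hfi0))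
  refine (hmin _ ⟨_, ⟨H.sub_mem hxH (H.smul_mem c (hfH i)), fun h => hxW ?_⟩, rfl⟩).not_gt hlt
  simpa using W.add_mem h (W.smul_mem c hfiW)

end Valuation

/-- A valuation trivial on `k` takes at most `e = dim_k H` distinct values on a
finite-dimensional `k`-subspace `H` of `K` minus zero, with equality when the residue field
of the valuation is `k`. -/
theorem stmt17 (k K : Type*) [Field k] [Field K] [Algebra k K]
    (Γ₀ : Type*) [LinearOrderedCommGroupWithZero Γ₀]
    (v : Valuation K Γ₀)
    (htriv : ∀ c : k, c ≠ 0 → v (algebraMap k K c) = 1)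
    (H : Submodule k K) (e : ℕ) [FiniteDimensional k H]
    (hdim : Module.finrank k H = e) :
    (⇑v '' {x : K | x ∈ H ∧ x ≠ 0}).Finite ∧
    (⇑v '' {x : K | x ∈ H ∧ x ≠ 0}).ncard ≤ e ∧
    ((∀ x : K, v x ≤ 1 → ∃ c : k, v (x - algebraMap k K c) < 1) →
      (⇑v '' {x : K | x ∈ H ∧ x ≠ 0}).ncard = e) := by
  set S := ⇑v '' {x : K | x ∈ H ∧ x ≠ 0}
  choose σ hσ hσv using fun γ : S => γ.2
  have hli : LinearIndependent k σ :=
    v.linearIndependent_of_injective_comp htriv (fun γ => (hσ γ).2)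
      fun γ δ h => Subtype.ext ((hσv γ).symm.trans (h.trans (hσv δ)))
  have hliH : LinearIndependent k fun γ => (⟨σ γ, (hσ γ).1⟩ : H) := .of_comp H.subtype hli
  have : Finite S := hliH.finite_of_isNoetherian
  have := Fintype.ofFinite S
  have hcard : S.ncard = Fintype.card S := by rw [← Nat.card_coe_set_eq, Nat.card_eq_fintype_card]
  refine ⟨S.toFinite, hcard ▸ hdim ▸ hliH.fintype_card_le_finrank, fun hres => ?_⟩
  have hspan : span k (Set.range σ) = H :=
    le_antisymm (span_le.mpr (Set.range_subset_iff.mpr fun γ => (hσ γ).1))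
      (v.le_span_of_forall_exists_map_eq hres (fun γ => (hσ γ).1)
        fun x hxH hx0 => ⟨⟨v x, x, ⟨hxH, hx0⟩, rfl⟩, hσv _⟩)
  rw [hcard, ← hdim, ← finrank_span_eq_card hli, hspan]
end

section
/- Let V be a real vector space with a symmetric bilinear form B, and let a ∈ V satisfy B(a, a) > 0. Assume that B is negative semidefinite on the orthogonal complement of a: B(y, y) ≤ 0 for every y ∈ V with B(a, y) = 0. Then: (i) for every x ∈ V, B(a, x)² ≥ B(a, a) · B(x, x) (reverse Cauchy–Schwarz); and (ii) for every b ∈ V with B(b, b) > 0, B is negative semidefinite on the orthogonal complement of b, i.e. B(y, y) ≤ 0 for every y ∈ V with B(b, y) = 0. -/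
/-!
For any `u, v`, the vector `B a v • u - B a u • v` is `B`-orthogonal to `a`, so its `B`-square is
nonpositive. With `(u, v) = (x, a)` that square is `B a a * (B a a * B x x - B a x ^ 2)`, which gives
reverse Cauchy–Schwarz. With `(u, v) = (b, y)` and `B b y = 0` it is
`B a y ^ 2 * B b b + B a b ^ 2 * B y y`, and `B a b ^ 2 > 0` by reverse Cauchy–Schwarz.
-/

section CommRing

variable {R V : Type*} [CommRing R] [AddCommGroup V] [Module R V] (B : V →ₗ[R] V →ₗ[R] R)

theorem bilin_apply_smul_sub_smul_eq_zero (a u v : V) :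
    B a (B a v • u - B a u • v) = 0 := by
  simp only [map_sub, map_smul, smul_eq_mul]
  ring

theorem bilin_smul_sub_smul_self (hB : ∀ x y, B x y = B y x) (s t : R) (u v : V) :
    B (s • u - t • v) (s • u - t • v) = s ^ 2 * B u u - 2 * s * t * B u v + t ^ 2 * B v v := by
  simp only [map_sub, map_smul, LinearMap.sub_apply, LinearMap.smul_apply, smul_eq_mul, hB v u]
  ring

end CommRing

section OrderedField

variable {𝕜 V : Type*} [Field 𝕜] [LinearOrder 𝕜] [IsStrictOrderedRing 𝕜]
  [AddCommGroup V] [Module 𝕜 V] {B : V →ₗ[𝕜] V →ₗ[𝕜] 𝕜}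

theorem mul_apply_self_le_sq_of_nonpos_on_orthogonal (hB : ∀ x y, B x y = B y x) {a : V}
    (ha : 0 < B a a) (hneg : ∀ y, B a y = 0 → B y y ≤ 0) (x : V) :
    B a a * B x x ≤ B a x ^ 2 := by
  have hy := hneg _ (bilin_apply_smul_sub_smul_eq_zero B a x a)
  rw [bilin_smul_sub_smul_self B hB, hB x a] at hy
  have : B a a * (B a a * B x x - B a x ^ 2) ≤ 0 := by linear_combination hy
  linarith [nonpos_of_mul_nonpos_right this ha]

theorem apply_self_nonpos_of_orthogonal_of_pos (hB : ∀ x y, B x y = B y x) {a : V}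
    (ha : 0 < B a a) (hneg : ∀ y, B a y = 0 → B y y ≤ 0) {b : V} (hb : 0 < B b b) {y : V}
    (hby : B b y = 0) : B y y ≤ 0 := by
  have hab : 0 < B a b ^ 2 :=
    (mul_pos ha hb).trans_le (mul_apply_self_le_sq_of_nonpos_on_orthogonal hB ha hneg b)
  have hz := hneg _ (bilin_apply_smul_sub_smul_eq_zero B a b y)
  rw [bilin_smul_sub_smul_self B hB, hby] at hz
  have : B a b ^ 2 * B y y ≤ 0 := by linarith [mul_nonneg (sq_nonneg (B a y)) hb.le]
  exact nonpos_of_mul_nonpos_right this hab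

end OrderedField

/-- Hyperbolic bilinear forms: if `B(a,a) > 0` and `B` is negative semidefinite on the
orthogonal complement of `a`, then reverse Cauchy–Schwarz holds, and the same
semidefiniteness holds for the orthogonal complement of any `b` with `B(b,b) > 0`. -/
theorem stmt18 (V : Type*) [AddCommGroup V] [Module ℝ V]
    (B : V →ₗ[ℝ] V →ₗ[ℝ] ℝ) (hsymm : ∀ x y, B x y = B y x)
    (a : V) (ha : 0 < B a a)
    (hneg : ∀ y : V, B a y = 0 → B y y ≤ 0) :
    (∀ x : V, B a a * B x x ≤ (B a x) ^ 2) ∧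
    (∀ b : V, 0 < B b b → ∀ y : V, B b y = 0 → B y y ≤ 0) :=
  ⟨mul_apply_self_le_sq_of_nonpos_on_orthogonal hsymm ha hneg,
    fun _ hb _ hby => apply_self_nonpos_of_orthogonal_of_pos hsymm ha hneg hb hby⟩
end
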